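/- arXiv:2104.03832 — 15 statements merged into one kernel-verified Lean document; each statement's English description precedes it below -/
import Mathlib

section
/- Let M and N be objects of an abelian category 𝒜 such that every direct summand of M is isomorphic to a subobject of N (i.e., for every section u : U ⟶ M there exists a monomorphism U ⟶ N). Then N is strongly M-CS-Rickart if and only if N is M-CS-Rickart and M is weak duo. -/
open CategoryTheory CategoryTheory.Limits

universe w v u

variable {C : Type u} [Category.{v} C] [Abelian C]

/-- A morphism is a section if it is a split monomorphism. -/
def IsSection {K M : C} (s : K ⟶ M) : Prop := ∃ p : M ⟶ K, s ≫ p = 𝟙 K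

/-- A morphism is a retraction if it is a split epimorphism. -/
def IsRetraction {M P : C} (r : M ⟶ P) : Prop := ∃ s : P ⟶ M, s ≫ r = 𝟙 P

/-- An essential monomorphism: a mono `e` such that any `h` with `e ≫ h` mono is mono. -/
def EssentialMono {K L : C} (e : K ⟶ L) : Prop :=
  Mono e ∧ ∀ ⦃P : C⦄ (h : L ⟶ P), Mono (e ≫ h) → Mono h

/-- A superfluous epimorphism: an epi `t` such that any `h` with `h ≫ t` epi is epi. -/
def SuperfluousEpi {P Q : C} (t : P ⟶ Q) : Prop :=
  Epi t ∧ ∀ ⦃X : C⦄ (h : X ⟶ P), Epi (h ≫ t) → Epi h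

/-- A fully invariant morphism into `M`: every endomorphism of `M` restricts along it. -/
def FullyInvariant {L M : C} (s : L ⟶ M) : Prop :=
  ∀ h : M ⟶ M, ∃ α : L ⟶ L, s ≫ h = α ≫ s

/-- A fully coinvariant morphism out of `N`: every endomorphism of `N` descends along it. -/
def FullyCoinvariant {N P : C} (r : N ⟶ P) : Prop :=
  ∀ h : N ⟶ N, ∃ β : P ⟶ P, h ≫ r = r ≫ β

/-- An object is weak duo if every section into it is fully invariant. -/
def WeakDuo (X : C) : Prop := ∀ ⦃K : C⦄ (s : K ⟶ X), IsSection s → FullyInvariant s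

/-- `N` is `M`-CS-Rickart. -/
def CSRickart (M N : C) : Prop :=
  ∀ f : M ⟶ N, ∃ (L : C) (e : kernel f ⟶ L) (s : L ⟶ M),
    EssentialMono e ∧ IsSection s ∧ kernel.ι f = e ≫ s

/-- `N` is strongly `M`-CS-Rickart. -/
def StronglyCSRickart (M N : C) : Prop :=
  ∀ f : M ⟶ N, ∃ (L : C) (e : kernel f ⟶ L) (s : L ⟶ M),
    EssentialMono e ∧ IsSection s ∧ FullyInvariant s ∧ kernel.ι f = e ≫ s

/-- `N` is dual `M`-CS-Rickart. -/
def DualCSRickart (M N : C) : Prop :=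
  ∀ f : M ⟶ N, ∃ (P : C) (r : N ⟶ P) (t : P ⟶ cokernel f),
    IsRetraction r ∧ SuperfluousEpi t ∧ cokernel.π f = r ≫ t

/-- `N` is dual strongly `M`-CS-Rickart. -/
def DualStronglyCSRickart (M N : C) : Prop :=
  ∀ f : M ⟶ N, ∃ (P : C) (r : N ⟶ P) (t : P ⟶ cokernel f),
    IsRetraction r ∧ FullyCoinvariant r ∧ SuperfluousEpi t ∧ cokernel.π f = r ≫ t

/-- `N` is strongly `M`-Rickart. -/
def StronglyRickart (M N : C) : Prop :=
  ∀ f : M ⟶ N, IsSection (kernel.ι f) ∧ FullyInvariant (kernel.ι f)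

/-- `N` is dual strongly `M`-Rickart. -/
def DualStronglyRickart (M N : C) : Prop :=
  ∀ f : M ⟶ N, IsRetraction (cokernel.π f) ∧ FullyCoinvariant (cokernel.π f)

/-- `N` is `M`-𝒦-nonsingular. -/
def KNonsingular (M N : C) : Prop :=
  ∀ f : M ⟶ N, EssentialMono (kernel.ι f) → f = 0

/-- `M` is `N`-𝒯-nonsingular. -/
def TNonsingular (M N : C) : Prop :=
  ∀ f : M ⟶ N, SuperfluousEpi (cokernel.π f) → f = 0

/-- `A` is an essential subobject of `B` (in the subobject lattice of `M`). -/
def EssentialIn {M : C} (A B : Subobject M) : Prop :=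
  A ≤ B ∧ ∀ X : Subobject M, X ≤ B → X ⊓ A = ⊥ → X = ⊥

/-- A subobject is a direct summand if its inclusion splits. -/
def SubDirectSummand {M : C} (U : Subobject M) : Prop := IsSection U.arrow

/-- A subobject is fully invariant if its inclusion monomorphism is fully invariant. -/
def SubFullyInvariant {M : C} (U : Subobject M) : Prop := FullyInvariant U.arrow

/-- `M` is strictly SIP-extending. -/
def StrictlySIPExtending (M : C) : Prop :=
  ∀ A B : Subobject M,
    (∃ U, SubDirectSummand U ∧ EssentialIn A U) →
    (∃ V, SubDirectSummand V ∧ EssentialIn B V) →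
    ∃ W, SubDirectSummand W ∧ SubFullyInvariant W ∧ EssentialIn (A ⊓ B) W

/-- `M` is strictly SSIP-extending: for any family of subobjects, each essential in a
direct summand, any greatest lower bound of the family is essential in a fully invariant
direct summand. -/
def StrictlySSIPExtending (M : C) : Prop :=
  ∀ ⦃ι : Type w⦄ (A : ι → Subobject M) (K : Subobject M), IsGLB (Set.range A) K →
    (∀ i, ∃ U, SubDirectSummand U ∧ EssentialIn (A i) U) →
    ∃ W, SubDirectSummand W ∧ SubFullyInvariant W ∧ EssentialIn K W

/-- An object is indecomposable: nonzero, and any biproduct decomposition is trivial. -/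
def IndecomposableObj (M : C) : Prop :=
  ¬ IsZero M ∧ ∀ (A B : C), Nonempty (M ≅ A ⊞ B) → IsZero A ∨ IsZero B

theorem stmt0 (M N : C)
    (hsub : ∀ ⦃U : C⦄ (u : U ⟶ M), IsSection u → ∃ m : U ⟶ N, Mono m) :
    StronglyCSRickart M N ↔ CSRickart M N ∧ WeakDuo M := by
  constructor
  · intro H
    refine ⟨fun f => ?_, fun K s hs => ?_⟩
    · obtain ⟨L, e, s, he, hsec, _, hc⟩ := H f
      exact ⟨L, e, s, he, hsec, hc⟩
    · obtain ⟨p, hp⟩ := hs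
      have hker : (𝟙 M - p ≫ s) ≫ p = 0 := by
        rw [Preadditive.sub_comp, Category.id_comp, Category.assoc, hp,
          Category.comp_id, sub_self]
      set r' : M ⟶ kernel p := kernel.lift p (𝟙 M - p ≫ s) hker with hr'
      have hri : r' ≫ kernel.ι p = 𝟙 M - p ≫ s := kernel.lift_ι _ _ _
      have hip : kernel.ι p ≫ p = 0 := kernel.condition p
      have hir : kernel.ι p ≫ r' = 𝟙 (kernel p) := by
        rw [← cancel_mono (kernel.ι p)]
        simp [hri, Preadditive.comp_sub, reassoc_of% hip]
      obtain ⟨m', hm'⟩ := hsub (kernel.ι p) ⟨r', hir⟩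
      haveI := hm'
      set f : M ⟶ N := r' ≫ m' with hf
      have hsf : s ≫ f = 0 := by
        have h1 : s ≫ r' = 0 := by
          rw [← cancel_mono (kernel.ι p)]
          simp [hri, Preadditive.comp_sub, reassoc_of% hp]
        rw [hf, ← Category.assoc, h1, zero_comp]
      set a : K ⟶ kernel f := kernel.lift f s hsf with haa
      have ha : a ≫ kernel.ι f = s := kernel.lift_ι _ _ _
      have hkr : kernel.ι f ≫ r' = 0 := by
        have h0 : kernel.ι f ≫ r' ≫ m' = 0 := kernel.condition f
        rw [← Category.assoc] at h0
        exact (cancel_mono m').mp (by rw [h0, zero_comp])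
      have hks : kernel.ι f ≫ (p ≫ s) = kernel.ι f := by
        have h2 : kernel.ι f ≫ (𝟙 M - p ≫ s) = 0 := by
          rw [← hri, ← Category.assoc, hkr, zero_comp]
        rw [Preadditive.comp_sub, Category.comp_id, sub_eq_zero] at h2
        exact h2.symm
      have hainv1 : a ≫ kernel.ι f ≫ p = 𝟙 K := by
        rw [← Category.assoc, ha, hp]
      have hainv2 : (kernel.ι f ≫ p) ≫ a = 𝟙 (kernel f) := by
        rw [← cancel_mono (kernel.ι f)]
        simp [ha, hks]
      obtain ⟨L, e, s', he, hsec', hfi, hc⟩ := H f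
      set t : L ⟶ kernel f := s' ≫ p ≫ a with ht
      have het : e ≫ t = 𝟙 (kernel f) := by
        rw [ht, ← Category.assoc, ← hc, ← Category.assoc]
        exact hainv2
      haveI hmt : Mono t := he.2 t (by rw [het]; infer_instance)
      have hte : t ≫ e = 𝟙 L := by
        rw [← cancel_mono t, Category.assoc, het, Category.comp_id, Category.id_comp]
      intro h
      obtain ⟨α', hα'⟩ := hfi h
      refine ⟨a ≫ e ≫ α' ≫ t ≫ kernel.ι f ≫ p, ?_⟩
      have hse : s = a ≫ e ≫ s' := by rw [← ha, hc]
      calc s ≫ h = a ≫ e ≫ (s' ≫ h) := by rw [hse]; simp [Category.assoc]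
        _ = a ≫ e ≫ α' ≫ s' := by rw [hα']
        _ = a ≫ e ≫ α' ≫ (t ≫ e) ≫ s' := by rw [hte, Category.id_comp]
        _ = a ≫ e ≫ α' ≫ t ≫ kernel.ι f := by rw [Category.assoc, ← hc]
        _ = a ≫ e ≫ α' ≫ t ≫ kernel.ι f ≫ (p ≫ s) := by rw [hks]
        _ = (a ≫ e ≫ α' ≫ t ≫ kernel.ι f ≫ p) ≫ s := by simp [Category.assoc]
  · rintro ⟨hcs, hwd⟩ f
    obtain ⟨L, e, s, he, hsec, hc⟩ := hcs f
    exact ⟨L, e, s, he, hsec, hwd s hsec, hc⟩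
end

section
/- Let M and N be objects of an abelian category 𝒜 such that every direct summand of N is isomorphic to a factor object of M (i.e., for every retraction N ⟶ V there exists an epimorphism M ⟶ V). Then N is dual strongly M-CS-Rickart if and only if N is dual M-CS-Rickart and N is weak duo. -/
open CategoryTheory CategoryTheory.Limits

universe w v u

variable {C : Type u} [Category.{v} C] [Abelian C]

theorem stmt1 (M N : C)
    (hquot : ∀ ⦃V : C⦄ (r : N ⟶ V), IsRetraction r → ∃ p : M ⟶ V, Epi p) :
    DualStronglyCSRickart M N ↔ DualCSRickart M N ∧ WeakDuo N := by
  constructor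
  · intro hs
    constructor
    · intro f
      obtain ⟨P, r, t, hr, _, ht, hfac⟩ := hs f
      exact ⟨P, r, t, hr, ht, hfac⟩
    · intro K s hsec
      obtain ⟨p, hsp⟩ := hsec
      obtain ⟨g, hg⟩ := hquot p ⟨s, hsp⟩
      haveI := hg
      set f : M ⟶ N := g ≫ s with hf
      obtain ⟨P₀, r₀, t, ⟨σ₀, hσ₀⟩, hcoinv, ⟨htepi, htsup⟩, hfac⟩ := hs f
      have hf0 : f ≫ (𝟙 N - p ≫ s) = 0 := by
        rw [hf, Preadditive.comp_sub, Category.comp_id, Category.assoc,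
          ← Category.assoc s p s, hsp, Category.id_comp, sub_self]
      set j' : cokernel f ⟶ N := cokernel.desc f (𝟙 N - p ≫ s) hf0 with hj'
      have hπj : cokernel.π f ≫ j' = 𝟙 N - p ≫ s := cokernel.π_desc _ _ _
      have hsπ : s ≫ cokernel.π f = 0 := by
        rw [← cancel_epi g, ← Category.assoc, ← hf, cokernel.condition, comp_zero]
      have hjπ : j' ≫ cokernel.π f = 𝟙 (cokernel f) := by
        rw [← cancel_epi (cokernel.π f), ← Category.assoc, hπj, Preadditive.sub_comp,
          Category.id_comp, Category.assoc, hsπ, comp_zero, sub_zero, Category.comp_id]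
      have h1t : (j' ≫ r₀) ≫ t = 𝟙 (cokernel f) := by
        rw [Category.assoc, ← hfac, hjπ]
      haveI : Mono (j' ≫ r₀) := by
        have : Mono ((j' ≫ r₀) ≫ t) := by rw [h1t]; infer_instance
        exact mono_of_mono (j' ≫ r₀) t
      haveI : Epi (j' ≫ r₀) := by
        refine htsup _ ?_
        rw [h1t]; infer_instance
      haveI : IsIso (j' ≫ r₀) := isIso_of_mono_of_epi _
      haveI : IsIso t := by
        have : IsIso ((j' ≫ r₀) ≫ t) := by rw [h1t]; infer_instance
        exact IsIso.of_isIso_comp_left (j' ≫ r₀) t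
      have hπcoinv : ∀ h : N ⟶ N, ∃ β', h ≫ cokernel.π f = cokernel.π f ≫ β' := by
        intro h
        obtain ⟨β, hβ⟩ := hcoinv h
        refine ⟨inv t ≫ β ≫ t, ?_⟩
        simp [hfac, reassoc_of% hβ]
      intro h
      obtain ⟨β', hβ'⟩ := hπcoinv h
      refine ⟨s ≫ h ≫ p, ?_⟩
      have key : s ≫ h ≫ cokernel.π f = 0 := by
        rw [hβ', ← Category.assoc, hsπ, zero_comp]
      have hid : (𝟙 N : N ⟶ N) = p ≫ s + cokernel.π f ≫ j' := by
        rw [hπj]; abel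
      have step : s ≫ h = (s ≫ h) ≫ (p ≫ s) + (s ≫ h) ≫ (cokernel.π f ≫ j') := by
        rw [← Preadditive.comp_add, ← hid, Category.comp_id]
      have hz : (s ≫ h) ≫ (cokernel.π f ≫ j') = 0 := by
        have : (s ≫ h) ≫ (cokernel.π f ≫ j') = (s ≫ h ≫ cokernel.π f) ≫ j' := by
          simp only [Category.assoc]
        rw [this, key, zero_comp]
      rw [step, hz, add_zero]
      simp only [Category.assoc]
  · rintro ⟨hd, wd⟩ f
    obtain ⟨P, r, t, ⟨σ, hσ⟩, hts, hfac⟩ := hd f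
    refine ⟨P, r, t, ⟨σ, hσ⟩, ?_, hts, hfac⟩
    have hq0 : (𝟙 N - r ≫ σ) ≫ r = 0 := by
      rw [Preadditive.sub_comp, Category.id_comp, Category.assoc, hσ, Category.comp_id, sub_self]
    set q : N ⟶ kernel r := kernel.lift r (𝟙 N - r ≫ σ) hq0 with hq
    have hqι : q ≫ kernel.ι r = 𝟙 N - r ≫ σ := kernel.lift_ι _ _ _
    have hsec : kernel.ι r ≫ q = 𝟙 (kernel r) := by
      rw [← cancel_mono (kernel.ι r), Category.assoc, hqι, Category.id_comp,
        Preadditive.comp_sub, Category.comp_id, ← Category.assoc, kernel.condition, zero_comp, sub_zero]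
    have hfi := wd (kernel.ι r) ⟨q, hsec⟩
    intro h
    obtain ⟨α, hα⟩ := hfi h
    refine ⟨σ ≫ h ≫ r, ?_⟩
    have hz : (𝟙 N - r ≫ σ) ≫ (h ≫ r) = 0 := by
      rw [← hqι, Category.assoc, reassoc_of% hα, kernel.condition, comp_zero, comp_zero]
    have : h ≫ r - r ≫ σ ≫ h ≫ r = 0 := by
      have := hz
      rw [Preadditive.sub_comp, Category.id_comp] at this
      simpa only [Category.assoc] using this
    exact sub_eq_zero.mp this
end

section
/- Let M be an object of an abelian category 𝒜. Then: (1) M is strongly self-CS-Rickart if and only if M is self-CS-Rickart and weak duo; (2) M is dual strongly self-CS-Rickart if and only if M is dual self-CS-Rickart and weak duo. -/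
open CategoryTheory CategoryTheory.Limits

universe w v u

variable {C : Type u} [Category.{v} C] [Abelian C]

theorem stmt2 (M : C) :
    (StronglyCSRickart M M ↔ CSRickart M M ∧ WeakDuo M) ∧
    (DualStronglyCSRickart M M ↔ DualCSRickart M M ∧ WeakDuo M) := by
  constructor
  · constructor
    · intro H
      constructor
      · intro f
        obtain ⟨L, e, s, he, hs, _, hfac⟩ := H f
        exact ⟨L, e, s, he, hs, hfac⟩
      · intro K s hs
        obtain ⟨p, hp⟩ := hs
        haveI : IsSplitMono s := IsSplitMono.mk' ⟨p, hp⟩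
        set F : M ⟶ M := 𝟙 M - p ≫ s with hF
        obtain ⟨L, e', s', he', hs', hfi, hfac⟩ := H F
        have hsf : s ≫ F = 0 := by
          rw [hF, Preadditive.comp_sub, Category.comp_id, ← Category.assoc, hp,
            Category.id_comp, sub_self]
        set b : K ⟶ kernel F := kernel.lift F s hsf with hbdef
        have hb : b ≫ kernel.ι F = s := by
          rw [hbdef]; exact kernel.lift_ι F s hsf
        have hv : kernel.ι F ≫ p ≫ s = kernel.ι F := by
          have h2 : kernel.ι F ≫ (𝟙 M - p ≫ s) = 0 := by
            rw [← hF]; exact kernel.condition F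
          rwa [Preadditive.comp_sub, Category.comp_id, sub_eq_zero,
            eq_comm] at h2
        have hvb : kernel.ι F ≫ p ≫ b = 𝟙 (kernel F) := by
          rw [← cancel_mono (kernel.ι F), Category.id_comp, Category.assoc,
            Category.assoc, hb, ← Category.assoc, Category.assoc, hv]
        have he'h : e' ≫ s' ≫ p ≫ b = 𝟙 (kernel F) := by
          rw [← Category.assoc, ← hfac]; exact hvb
        haveI hmh : Mono (s' ≫ p ≫ b) := he'.2 _ (by rw [he'h]; infer_instance)
        have hhe' : (s' ≫ p ≫ b) ≫ e' = 𝟙 L := by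
          rw [← cancel_mono (s' ≫ p ≫ b), Category.assoc, he'h,
            Category.comp_id, Category.id_comp]
        have hs'ps : s' ≫ p ≫ s = s' :=
          calc s' ≫ p ≫ s = s' ≫ p ≫ b ≫ kernel.ι F := by rw [hb]
            _ = s' ≫ p ≫ b ≫ e' ≫ s' := by rw [hfac]
            _ = ((s' ≫ p ≫ b) ≫ e') ≫ s' := by simp only [Category.assoc]
            _ = s' := by rw [hhe', Category.id_comp]
        intro g
        obtain ⟨α', hα'⟩ := hfi g
        refine ⟨b ≫ e' ≫ α' ≫ (s' ≫ p ≫ b) ≫ kernel.ι F ≫ p, ?_⟩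
        have lhs : s ≫ g = b ≫ e' ≫ α' ≫ s' := by
          conv_lhs => rw [← hb]
          rw [Category.assoc, hfac]
          simp only [Category.assoc]
          rw [hα']
        have rhs : (b ≫ e' ≫ α' ≫ (s' ≫ p ≫ b) ≫ kernel.ι F ≫ p) ≫ s =
            b ≫ e' ≫ α' ≫ s' := by
          simp only [Category.assoc]
          rw [hv, hb, hs'ps]
        exact lhs.trans rhs.symm
    · rintro ⟨hCS, hWD⟩ f
      obtain ⟨L, e, s, he, hs, hfac⟩ := hCS f
      exact ⟨L, e, s, he, hs, hWD s hs, hfac⟩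
  · constructor
    · intro H
      constructor
      · intro f
        obtain ⟨P, r, t, hr, _, ht, hfac⟩ := H f
        exact ⟨P, r, t, hr, ht, hfac⟩
      · intro K s hs
        obtain ⟨p, hp⟩ := hs
        haveI : IsSplitEpi p := IsSplitEpi.mk' ⟨s, hp⟩
        set E : M ⟶ M := p ≫ s with hE
        have hee : E ≫ E = E := by
          rw [hE, Category.assoc, ← Category.assoc s, hp, Category.id_comp]
        obtain ⟨P, r, t, hr, hco, ht, hfac⟩ := H E
        have hsπ : s ≫ cokernel.π E = 0 := by
          rw [← cancel_epi p, comp_zero, ← Category.assoc, ← hE]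
          exact cokernel.condition E
        have hej : E ≫ (𝟙 M - E) = 0 := by
          rw [Preadditive.comp_sub, Category.comp_id, hee, sub_self]
        set j : cokernel E ⟶ M := cokernel.desc E (𝟙 M - E) hej with hjdef
        have hπj : cokernel.π E ≫ j = 𝟙 M - E := by
          rw [hjdef]; exact cokernel.π_desc E _ hej
        have hjπ : j ≫ cokernel.π E = 𝟙 (cokernel E) := by
          rw [← cancel_epi (cokernel.π E), ← Category.assoc, hπj,
            Preadditive.sub_comp, Category.id_comp, cokernel.condition,
            sub_zero, Category.comp_id]
        have hut : (j ≫ r) ≫ t = 𝟙 (cokernel E) := by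
          rw [Category.assoc, ← hfac, hjπ]
        haveI heu : Epi (j ≫ r) := ht.2 _ (by rw [hut]; infer_instance)
        have htu : t ≫ j ≫ r = 𝟙 P := by
          rw [← cancel_epi (j ≫ r), ← Category.assoc, hut, Category.id_comp,
            Category.comp_id]
        intro g
        obtain ⟨β', hβ'⟩ := hco g
        have hβ : g ≫ cokernel.π E = cokernel.π E ≫ (j ≫ r) ≫ β' ≫ t := by
          rw [hfac, ← Category.assoc, hβ']
          simp only [Category.assoc]
          rw [reassoc_of% htu]
        have h0 : (s ≫ g) ≫ cokernel.π E = 0 := by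
          rw [Category.assoc, hβ, ← Category.assoc, hsπ, zero_comp]
        refine ⟨s ≫ g ≫ p, ?_⟩
        have h2 : (s ≫ g) ≫ (𝟙 M - E) = 0 := by
          rw [← hπj, ← Category.assoc, h0, zero_comp]
        rw [Preadditive.comp_sub, Category.comp_id, sub_eq_zero] at h2
        conv_lhs => rw [h2]
        rw [hE]
        simp only [Category.assoc]
    · rintro ⟨hCS, hWD⟩ f
      obtain ⟨P, r, t, hr, ht, hfac⟩ := hCS f
      refine ⟨P, r, t, hr, ?_, ht, hfac⟩
      obtain ⟨w, hw⟩ := hr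
      haveI : IsSplitMono w := IsSplitMono.mk' ⟨r, hw⟩
      have hεr : (𝟙 M - r ≫ w) ≫ r = 0 := by
        rw [Preadditive.sub_comp, Category.id_comp, Category.assoc, hw,
          Category.comp_id, sub_self]
      set q : M ⟶ kernel r := kernel.lift r (𝟙 M - r ≫ w) hεr with hqdef
      have hqk : q ≫ kernel.ι r = 𝟙 M - r ≫ w := by
        rw [hqdef]; exact kernel.lift_ι r _ hεr
      have hkq : kernel.ι r ≫ q = 𝟙 (kernel r) := by
        rw [← cancel_mono (kernel.ι r), Category.assoc, hqk,
          Preadditive.comp_sub, Category.comp_id, ← Category.assoc,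
          kernel.condition, zero_comp, sub_zero, Category.id_comp]
      have hfi : FullyInvariant (kernel.ι r) := hWD (kernel.ι r) ⟨q, hkq⟩
      intro h
      obtain ⟨α, hα⟩ := hfi h
      refine ⟨w ≫ h ≫ r, ?_⟩
      have h1 : (𝟙 M - r ≫ w) ≫ h ≫ r = 0 := by
        rw [← hqk, Category.assoc, ← Category.assoc (kernel.ι r), hα,
          Category.assoc, kernel.condition, comp_zero, comp_zero]
      have h2 : h ≫ r - r ≫ w ≫ h ≫ r = 0 := by
        rw [Preadditive.sub_comp, Category.id_comp] at h1
        rw [← h1, Category.assoc]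
      rw [sub_eq_zero] at h2
      exact h2
end

section
/- Let M be an indecomposable object of an abelian category 𝒜. Then: (1) M is strongly self-CS-Rickart if and only if M is self-CS-Rickart; (2) M is dual strongly self-CS-Rickart if and only if M is dual self-CS-Rickart. -/
open CategoryTheory CategoryTheory.Limits

universe w v u

variable {C : Type u} [Category.{v} C] [Abelian C]

lemma section_fullyInvariant {M : C} (hM : IndecomposableObj M) {L : C} (s : L ⟶ M)
    (hs : IsSection s) : FullyInvariant s := by
  obtain ⟨p, hp⟩ := hs
  haveI : IsSplitMono s := ⟨⟨⟨p, hp⟩⟩⟩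
  have hb := isBilimitBinaryBiconeOfIsSplitMonoOfCokernel (cokernelIsCokernel s)
  have iso : M ≅ L ⊞ cokernel s := biprod.uniqueUpToIso _ _ hb
  rcases hM.2 L (cokernel s) ⟨iso⟩ with hL | hc
  · intro h
    exact ⟨0, by rw [hL.eq_of_src s 0]; simp⟩
  · have : cokernel.π s = 0 := hc.eq_of_tgt _ _
    haveI : Epi s := Preadditive.epi_of_cokernel_zero this
    haveI : IsIso s := isIso_of_mono_of_epi s
    intro h
    exact ⟨s ≫ h ≫ inv s, by simp⟩

lemma retraction_fullyCoinvariant {M : C} (hM : IndecomposableObj M) {P : C} (r : M ⟶ P)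
    (hr : IsRetraction r) : FullyCoinvariant r := by
  obtain ⟨s', hs'⟩ := hr
  haveI : IsSplitEpi r := ⟨⟨⟨s', hs'⟩⟩⟩
  have hb := isBilimitBinaryBiconeOfIsSplitEpiOfKernel (kernelIsKernel r)
  have iso : M ≅ kernel r ⊞ P := biprod.uniqueUpToIso _ _ hb
  rcases hM.2 (kernel r) P ⟨iso⟩ with hk | hP
  · have : kernel.ι r = 0 := hk.eq_of_src _ _
    haveI : Mono r := Preadditive.mono_of_kernel_zero this
    haveI : IsIso r := isIso_of_mono_of_epi r
    intro h
    exact ⟨inv r ≫ h ≫ r, by simp⟩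
  · intro h
    exact ⟨0, by rw [hP.eq_of_tgt r 0]; simp⟩

theorem stmt3 (M : C) (hM : IndecomposableObj M) :
    (StronglyCSRickart M M ↔ CSRickart M M) ∧
    (DualStronglyCSRickart M M ↔ DualCSRickart M M) := by
  constructor
  · constructor
    · intro h f
      obtain ⟨L, e, s, he, hs, _, hk⟩ := h f
      exact ⟨L, e, s, he, hs, hk⟩
    · intro h f
      obtain ⟨L, e, s, he, hs, hk⟩ := h f
      exact ⟨L, e, s, he, hs, section_fullyInvariant hM s hs, hk⟩
  · constructor
    · intro h f
      obtain ⟨P, r, t, hr, _, ht, hc⟩ := h f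
      exact ⟨P, r, t, hr, ht, hc⟩
    · intro h f
      obtain ⟨P, r, t, hr, ht, hc⟩ := h f
      exact ⟨P, r, t, hr, retraction_fullyCoinvariant hM r hr, ht, hc⟩
end

section
/- Let M be an object of an abelian category 𝒜. Then M is strongly self-CS-Rickart if and only if M is self-CS-Rickart and the endomorphism ring End_𝒜(M) is abelian (every idempotent endomorphism of M is central in End_𝒜(M)). -/
open CategoryTheory CategoryTheory.Limits

universe w v u

variable {C : Type u} [Category.{v} C] [Abelian C]

lemma essSecIso {K L : C} (e : K ⟶ L) (he : EssentialMono e) {r : L ⟶ K}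
    (hr : e ≫ r = 𝟙 K) : IsIso e := by
  have hm : Mono (e ≫ r) := by rw [hr]; infer_instance
  have mr : Mono r := he.2 r hm
  have hre : r ≫ e = 𝟙 L := by
    rw [← cancel_mono r, Category.assoc, hr, Category.comp_id, Category.id_comp]
  exact ⟨r, hr, hre⟩

lemma strongAux {M : C} (h : StronglyCSRickart M M) (ε : M ⟶ M) (hε : ε ≫ ε = ε)
    (g : M ⟶ M) : ε ≫ g ≫ ε = ε ≫ g := by
  set f := 𝟙 M - ε with hf
  have hεf : ε ≫ f = 0 := by simp [hf, Preadditive.comp_sub, hε]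
  set c := kernel.lift f ε hεf with hcdef
  have hc : c ≫ kernel.ι f = ε := kernel.lift_ι _ _ _
  have hι : kernel.ι f ≫ ε = kernel.ι f := by
    have h0 := kernel.condition f
    rw [hf, Preadditive.comp_sub, Category.comp_id, sub_eq_zero] at h0
    exact h0.symm
  have hιc : kernel.ι f ≫ c = 𝟙 _ := by
    rw [← cancel_mono (kernel.ι f), Category.assoc, hc, hι, Category.id_comp]
  obtain ⟨L, e, s, he, hs, hfi, hks⟩ := h f
  have hes : e ≫ s ≫ c = 𝟙 _ := by
    rw [← Category.assoc, ← hks, hιc]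
  have : IsIso e := essSecIso e he hes
  obtain ⟨α, hα⟩ := hfi g
  have key : kernel.ι f ≫ g = (e ≫ α ≫ inv e) ≫ kernel.ι f := by
    rw [hks]
    simp only [Category.assoc, IsIso.inv_hom_id_assoc]
    rw [hα]
  have h1 : ε ≫ g = c ≫ (e ≫ α ≫ inv e) ≫ kernel.ι f := by
    rw [← key, ← hc, Category.assoc]
  calc ε ≫ g ≫ ε = (ε ≫ g) ≫ ε := by rw [Category.assoc]
    _ = c ≫ (e ≫ α ≫ inv e) ≫ kernel.ι f ≫ ε := by
        rw [h1]; simp only [Category.assoc]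
    _ = c ≫ (e ≫ α ≫ inv e) ≫ kernel.ι f := by rw [hι]
    _ = ε ≫ g := h1.symm

theorem stmt4 (M : C) :
    StronglyCSRickart M M ↔
      CSRickart M M ∧ ∀ e : M ⟶ M, e ≫ e = e → ∀ g : M ⟶ M, e ≫ g = g ≫ e := by
  constructor
  · intro h
    refine ⟨fun f => ?_, fun ε hε g => ?_⟩
    · obtain ⟨L, e, s, he, hs, _, hks⟩ := h f
      exact ⟨L, e, s, he, hs, hks⟩
    · have h1 := strongAux h ε hε g
      have hε' : (𝟙 M - ε) ≫ (𝟙 M - ε) = 𝟙 M - ε := by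
        simp [Preadditive.sub_comp, Preadditive.comp_sub, hε]
      have h2 := strongAux h (𝟙 M - ε) hε' g
      simp only [Preadditive.sub_comp, Preadditive.comp_sub, Category.id_comp, Category.comp_id] at h2
      -- h2 : (g - g ≫ ε) - (ε ≫ g - ε ≫ g ≫ ε)-ish = g - ε ≫ g
      rw [h1] at h2
      have h3 : g ≫ ε - ε ≫ g = 0 := by
        have h4 : g - ε ≫ g - (g ≫ ε - ε ≫ g) = g - ε ≫ g - 0 := by
          rw [sub_zero]; exact h2
        exact sub_right_injective h4
      rw [sub_eq_zero] at h3
      exact h3.symm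
  · rintro ⟨hcs, hab⟩ f
    obtain ⟨L, e, s, he, hs, hks⟩ := hcs f
    obtain ⟨p, hp⟩ := id hs
    refine ⟨L, e, s, he, hs, fun h => ⟨s ≫ h ≫ p, ?_⟩, hks⟩
    have hidem : (p ≫ s) ≫ (p ≫ s) = p ≫ s := by
      rw [Category.assoc, ← Category.assoc s p, hp, Category.id_comp]
    have hc := hab (p ≫ s) hidem h
    calc s ≫ h = (s ≫ p ≫ s) ≫ h := by rw [← Category.assoc, hp, Category.id_comp]
      _ = s ≫ (p ≫ s) ≫ h := by simp only [Category.assoc]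
      _ = s ≫ h ≫ p ≫ s := by rw [hc]
      _ = (s ≫ h ≫ p) ≫ s := by simp only [Category.assoc]
end

section
/- Let M be an object of an abelian category 𝒜. Then M is dual strongly self-CS-Rickart if and only if M is dual self-CS-Rickart and the endomorphism ring End_𝒜(M) is abelian (every idempotent endomorphism of M is central in End_𝒜(M)). -/
open CategoryTheory CategoryTheory.Limits

universe w v u

variable {C : Type u} [Category.{v} C] [Abelian C]

theorem stmt5 (M : C) :
    DualStronglyCSRickart M M ↔
      DualCSRickart M M ∧ ∀ e : M ⟶ M, e ≫ e = e → ∀ g : M ⟶ M, e ≫ g = g ≫ e := by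
  constructor
  · intro H
    refine ⟨?_, ?_⟩
    · intro f
      obtain ⟨P, r, t, hr, _, ht, hfact⟩ := H f
      exact ⟨P, r, t, hr, ht, hfact⟩
    have aux : ∀ e : M ⟶ M, e ≫ e = e → ∀ g : M ⟶ M, e ≫ g ≫ e = g ≫ e := by
      intro e he g
      have hfe : (𝟙 M - e) ≫ e = 0 := by
        simp [Preadditive.sub_comp, he]
      set q : cokernel (𝟙 M - e) ⟶ M := cokernel.desc _ e hfe with hqdef
      have hq : cokernel.π (𝟙 M - e) ≫ q = e := cokernel.π_desc _ _ _
      have heπ : e ≫ cokernel.π (𝟙 M - e) = cokernel.π (𝟙 M - e) := by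
        have h0 := cokernel.condition (𝟙 M - e)
        rw [Preadditive.sub_comp, Category.id_comp, sub_eq_zero] at h0
        exact h0.symm
      have hqπ : q ≫ cokernel.π (𝟙 M - e) = 𝟙 _ := by
        rw [← cancel_epi (cokernel.π (𝟙 M - e)), ← Category.assoc, hq, heπ,
          Category.comp_id]
      obtain ⟨P, r, t, ⟨sr, hsr⟩, hcoinv, ⟨htepi, hsup⟩, hfact⟩ := H (𝟙 M - e)
      have hht : (q ≫ r) ≫ t = 𝟙 _ := by
        rw [Category.assoc, ← hfact, hqπ]
      have hepi : Epi (q ≫ r) := hsup _ (by rw [hht]; infer_instance)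
      haveI : IsSplitMono (q ≫ r) := IsSplitMono.mk' ⟨t, hht⟩
      haveI : IsIso (q ≫ r) := isIso_of_mono_of_epi _
      haveI : IsIso t := by
        have := IsIso.inv_eq_of_hom_inv_id hht
        rw [← this]; infer_instance
      have her : e ≫ r = r := by
        rw [← cancel_mono t, Category.assoc, ← hfact, heπ, hfact]
      obtain ⟨β, hβ⟩ := hcoinv g
      have hge : g ≫ e = r ≫ β ≫ t ≫ q := by
        calc g ≫ e = g ≫ cokernel.π (𝟙 M - e) ≫ q := by rw [hq]
          _ = ((g ≫ r) ≫ t) ≫ q := by rw [hfact]; simp only [Category.assoc]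
          _ = r ≫ β ≫ t ≫ q := by rw [hβ]; simp only [Category.assoc]
      rw [hge]
      simp only [← Category.assoc]
      rw [her]
    intro e he g
    have h1 := aux e he g
    have hid : (𝟙 M - e) ≫ (𝟙 M - e) = 𝟙 M - e := by
      simp [Preadditive.sub_comp, Preadditive.comp_sub, he]
    have h2 := aux (𝟙 M - e) hid g
    simp only [Preadditive.sub_comp, Preadditive.comp_sub, Category.id_comp,
      Category.comp_id] at h2
    rw [h1, sub_self, sub_zero] at h2
    exact sub_right_inj.mp h2
  · rintro ⟨Hd, Hc⟩ f
    obtain ⟨P, r, t, hr, ht, hfact⟩ := Hd f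
    obtain ⟨s, hs⟩ := hr
    refine ⟨P, r, t, ⟨s, hs⟩, ?_, ht, hfact⟩
    intro h
    refine ⟨s ≫ h ≫ r, ?_⟩
    have he : (r ≫ s) ≫ (r ≫ s) = r ≫ s := by
      rw [Category.assoc, ← Category.assoc s, hs, Category.id_comp]
    have hc := Hc (r ≫ s) he h
    calc h ≫ r = (h ≫ r ≫ s) ≫ r := by
          simp only [Category.assoc, hs, Category.comp_id]
      _ = ((r ≫ s) ≫ h) ≫ r := by rw [hc]
      _ = r ≫ s ≫ h ≫ r := by simp only [Category.assoc]
end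

section
/- Let M and N be objects of an abelian category 𝒜. Then N is strongly M-CS-Rickart and N is M-𝒦-nonsingular if and only if N is strongly M-Rickart. -/
open CategoryTheory CategoryTheory.Limits

universe w v u

variable {C : Type u} [Category.{v} C] [Abelian C]

/-- If `e` is an essential mono and every commuting square against `t` forces `b ≫ t = 0`,
then `t = 0`. -/
lemma essentialMono_forces_zero {K L Y : C} {e : K ⟶ L} (he : EssentialMono e) (t : Y ⟶ L)
    (H : ∀ ⦃Z : C⦄ (a : Z ⟶ K) (b : Z ⟶ Y), a ≫ e = b ≫ t → b ≫ t = 0) : t = 0 := by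
  obtain ⟨heMono, heEss⟩ := he
  have hc : Mono (e ≫ cokernel.π t) := by
    rw [Preadditive.mono_iff_cancel_zero]
    intro Z w hw
    obtain ⟨x, hfac⟩ : ∃ x : Z ⟶ Abelian.image t, x ≫ Abelian.image.ι t = w ≫ e :=
      ⟨kernel.lift (cokernel.π t) (w ≫ e) (by rw [Category.assoc]; exact hw),
        kernel.lift_ι _ _ _⟩
    have hsq : pullback.fst (Abelian.factorThruImage t) x ≫ t =
        (pullback.snd (Abelian.factorThruImage t) x ≫ w) ≫ e := by
      calc pullback.fst (Abelian.factorThruImage t) x ≫ t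
          = pullback.fst (Abelian.factorThruImage t) x ≫
              (Abelian.factorThruImage t ≫ Abelian.image.ι t) := by rw [Abelian.image.fac]
        _ = (pullback.fst (Abelian.factorThruImage t) x ≫ Abelian.factorThruImage t) ≫
              Abelian.image.ι t := by rw [Category.assoc]
        _ = (pullback.snd (Abelian.factorThruImage t) x ≫ x) ≫ Abelian.image.ι t := by
              rw [pullback.condition]
        _ = pullback.snd (Abelian.factorThruImage t) x ≫ (x ≫ Abelian.image.ι t) := by
              rw [Category.assoc]
        _ = pullback.snd (Abelian.factorThruImage t) x ≫ (w ≫ e) := by rw [hfac]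
        _ = (pullback.snd (Abelian.factorThruImage t) x ≫ w) ≫ e := by rw [Category.assoc]
    have hzero : pullback.fst (Abelian.factorThruImage t) x ≫ t = 0 :=
      H (pullback.snd (Abelian.factorThruImage t) x ≫ w) _ hsq.symm
    have h1 : (pullback.snd (Abelian.factorThruImage t) x ≫ x) ≫ Abelian.image.ι t = 0 := by
      rw [← pullback.condition, Category.assoc, Abelian.image.fac]
      exact hzero
    have h2 : pullback.snd (Abelian.factorThruImage t) x ≫ x = 0 :=
      zero_of_comp_mono (Abelian.image.ι t) h1
    have h3 : x = 0 := by
      have hEpi : Epi (pullback.snd (Abelian.factorThruImage t) x) := inferInstance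
      exact (Preadditive.epi_iff_cancel_zero _).mp hEpi _ x h2
    have h4 : w ≫ e = 0 := by rw [← hfac, h3, zero_comp]
    exact (Preadditive.mono_iff_cancel_zero e).mp heMono _ w h4
  have hmc : Mono (cokernel.π t) := heEss _ hc
  have hcc := cokernel.condition t
  rwa [← zero_comp (f := cokernel.π t), cancel_mono (cokernel.π t)] at hcc

theorem stmt6 (M N : C) :
    (StronglyCSRickart M N ∧ KNonsingular M N) ↔ StronglyRickart M N := by
  constructor
  · rintro ⟨hCS, hK⟩ f
    obtain ⟨L, e, s, heEss, ⟨p, hsp⟩, hfi, hker⟩ := hCS f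
    have hsMono : Mono s := by
      have : Mono (s ≫ p) := by rw [hsp]; infer_instance
      exact mono_of_mono s p
    have heMono : Mono e := heEss.1
    have hgEss : EssentialMono (kernel.ι (p ≫ (s ≫ f))) := by
      refine ⟨inferInstance, ?_⟩
      intro P h hmono
      rw [Preadditive.mono_iff_cancel_zero]
      intro Y w hw
      have hi : ∀ ⦃Z : C⦄ (a : Z ⟶ Y), a ≫ w ≫ (p ≫ (s ≫ f)) = 0 → a ≫ w = 0 := by
        intro Z a ha
        have ha' : (a ≫ w) ≫ (p ≫ (s ≫ f)) = 0 := by rw [Category.assoc]; exact ha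
        have hz : kernel.lift (p ≫ (s ≫ f)) (a ≫ w) ha' ≫ kernel.ι (p ≫ (s ≫ f)) = a ≫ w :=
          kernel.lift_ι _ _ _
        have hz2 : kernel.lift (p ≫ (s ≫ f)) (a ≫ w) ha' ≫ kernel.ι (p ≫ (s ≫ f)) ≫ h = 0 := by
          rw [← Category.assoc, hz, Category.assoc, hw, comp_zero]
        have hz0 : kernel.lift (p ≫ (s ≫ f)) (a ≫ w) ha' = 0 :=
          (Preadditive.mono_iff_cancel_zero _).mp hmono _ _ hz2
        rw [← hz, hz0, zero_comp]
      have hH : ∀ ⦃Z : C⦄ (a : Z ⟶ kernel f) (b : Z ⟶ Y),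
          a ≫ e = b ≫ (w ≫ p) → b ≫ (w ≫ p) = 0 := by
        intro Z a b hab
        have hb : b ≫ w ≫ (p ≫ (s ≫ f)) = 0 := by
          have h1 : b ≫ w ≫ (p ≫ (s ≫ f)) = (b ≫ (w ≫ p)) ≫ (s ≫ f) := by
            simp only [Category.assoc]
          rw [h1, ← hab, Category.assoc, ← Category.assoc e s, ← hker,
            kernel.condition, comp_zero]
        have hbw := hi b hb
        rw [← Category.assoc, hbw, zero_comp]
      have ht : w ≫ p = 0 := essentialMono_forces_zero heEss (w ≫ p) hH
      have hwg : (𝟙 Y) ≫ w ≫ (p ≫ (s ≫ f)) = 0 := by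
        rw [Category.id_comp, ← Category.assoc, ht, zero_comp]
      have := hi (𝟙 Y) hwg
      rwa [Category.id_comp] at this
    have hg0 : p ≫ (s ≫ f) = 0 := hK _ hgEss
    have hsf : s ≫ f = 0 := by
      have h1 : s ≫ (p ≫ (s ≫ f)) = (s ≫ p) ≫ (s ≫ f) := by rw [Category.assoc]
      rw [hg0, comp_zero, hsp, Category.id_comp] at h1
      exact h1.symm
    have hvι : kernel.lift f s hsf ≫ kernel.ι f = s := kernel.lift_ι _ _ _
    have hve : kernel.lift f s hsf ≫ e = 𝟙 L := by
      have h1 : (kernel.lift f s hsf ≫ e) ≫ s = (𝟙 L) ≫ s := by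
        rw [Category.id_comp, Category.assoc, ← hker, hvι]
      exact (cancel_mono s).mp h1
    have hev : e ≫ kernel.lift f s hsf = 𝟙 (kernel f) := by
      have h1 : (e ≫ kernel.lift f s hsf) ≫ e = (𝟙 (kernel f)) ≫ e := by
        rw [Category.id_comp, Category.assoc, hve, Category.comp_id]
      exact (cancel_mono e).mp h1
    constructor
    · refine ⟨p ≫ kernel.lift f s hsf, ?_⟩
      rw [hker, Category.assoc, ← Category.assoc s p, hsp, Category.id_comp, hev]
    · intro h
      obtain ⟨α, hα⟩ := hfi h
      refine ⟨e ≫ α ≫ kernel.lift f s hsf, ?_⟩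
      rw [hker, Category.assoc, hα]
      simp only [Category.assoc]
      rw [← Category.assoc (kernel.lift f s hsf) e, hve, Category.id_comp]
  · intro hSR
    constructor
    · intro f
      obtain ⟨hs, hfiv⟩ := hSR f
      exact ⟨kernel f, 𝟙 _, kernel.ι f,
        ⟨inferInstance, fun P h hm => by rwa [Category.id_comp] at hm⟩,
        hs, hfiv, (Category.id_comp _).symm⟩
    · intro f hEss
      obtain ⟨p, hp⟩ := (hSR f).1
      have hpm : Mono p := hEss.2 p (by rw [hp]; infer_instance)
      have hpi : p ≫ kernel.ι f = 𝟙 M := by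
        have h1 : (p ≫ kernel.ι f) ≫ p = (𝟙 M) ≫ p := by
          rw [Category.id_comp, Category.assoc, hp, Category.comp_id]
        exact (cancel_mono p).mp h1
      have hIso : IsIso (kernel.ι f) := ⟨p, hp, hpi⟩
      rw [← cancel_epi (kernel.ι f), kernel.condition, comp_zero]
end

section
/- Let M and N be objects of an abelian category 𝒜. Then N is dual strongly M-CS-Rickart and M is N-𝒯-nonsingular if and only if N is dual strongly M-Rickart. -/
open CategoryTheory CategoryTheory.Limits

universe w v u

variable {C : Type u} [Category.{v} C] [Abelian C]

/-! If `cokernel.π f = r ≫ t` with `r` a retraction with section `s` and `t` superfluous, the image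
of `f ≫ r` lies in `ker t`. The image under any morphism of a subobject contained in the kernel
of a superfluous epimorphism is again superfluous, so `coker (f ≫ r ≫ s)` is superfluous and
`𝒯`-nonsingularity gives `f ≫ r = 0`. Then `r` factors through `coker f`, providing a section
of `t`, and a superfluous epimorphism with a section is an isomorphism. -/

-- Both hypothesis and conclusion say that the images of `h` and `g` together cover `N`.
lemma epi_comp_cokernel_π_of_epi_comp_cokernel_π {X Y N : C} (h : X ⟶ N) (g : Y ⟶ N)
    [Epi (h ≫ cokernel.π g)] : Epi (g ≫ cokernel.π h) := by
  refine Preadditive.epi_of_cancel_zero _ fun v hv => ?_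
  have hu : cokernel.π h ≫ v = cokernel.π g ≫ cokernel.desc g _ (by simpa using hv) :=
    (cokernel.π_desc _ _ _).symm
  have hu₀ : cokernel.desc g _ (by simpa using hv) = 0 :=
    zero_of_epi_comp (h ≫ cokernel.π g)
      (by rw [Category.assoc, ← hu, cokernel.condition_assoc, zero_comp])
  exact zero_of_epi_comp (cokernel.π h) (by rw [hu, hu₀, comp_zero])

lemma SuperfluousEpi.eq_zero_of_epi_comp {K P T Q : C} {t : P ⟶ T} (ht : SuperfluousEpi t)
    {k : K ⟶ P} (hk : k ≫ t = 0) (ψ : P ⟶ Q) [Epi (k ≫ ψ)] : ψ = 0 := by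
  obtain ⟨_, ht⟩ := ht
  have : Epi ψ := epi_of_epi k ψ
  -- `ker ψ + ker t = P`: if `t ≫ v` kills `ker ψ` it factors as `ψ ≫ b`, and `b = 0`
  -- because `k ≫ ψ` is epi while `k ≫ t = 0`.
  have hker : Epi (kernel.ι ψ ≫ t) := by
    refine Preadditive.epi_of_cancel_zero _ fun v hv => ?_
    have hb := Abelian.comp_epiDesc ψ (t ≫ v) (by simpa using hv)
    have hb₀ : Abelian.epiDesc ψ (t ≫ v) (by simpa using hv) = 0 :=
      zero_of_epi_comp (k ≫ ψ) (by rw [Category.assoc, hb, reassoc_of% hk, zero_comp])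
    exact zero_of_epi_comp t (by rw [← hb, hb₀, comp_zero])
  have := ht _ hker
  exact zero_of_epi_comp (kernel.ι ψ) (kernel.condition ψ)

lemma superfluousEpi_cokernel_π_comp {K P T N : C} {t : P ⟶ T} (ht : SuperfluousEpi t)
    {k : K ⟶ P} (hk : k ≫ t = 0) (φ : P ⟶ N) : SuperfluousEpi (cokernel.π (k ≫ φ)) := by
  refine ⟨inferInstance, fun X h hh => ?_⟩
  have := epi_comp_cokernel_π_of_epi_comp_cokernel_π h (k ≫ φ)
  have : Epi (k ≫ φ ≫ cokernel.π h) := by simpa using this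
  have hφ : φ ≫ cokernel.π h = 0 := ht.eq_zero_of_epi_comp hk _
  rw [Preadditive.epi_iff_isZero_cokernel]
  exact IsZero.of_epi_eq_zero (k ≫ φ ≫ cokernel.π h) (by rw [hφ, comp_zero])

lemma superfluousEpi_id {𝒞 : Type*} [Category 𝒞] (X : 𝒞) : SuperfluousEpi (𝟙 X) :=
  ⟨inferInstance, fun _ h hh => by simpa using hh⟩

lemma SuperfluousEpi.isIso_of_comp_eq_id {𝒞 : Type*} [Category 𝒞] {P T : 𝒞} {t : P ⟶ T}
    (ht : SuperfluousEpi t) {w : T ⟶ P} (hw : w ≫ t = 𝟙 T) : IsIso t := by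
  have : Epi w := ht.2 w (by rw [hw]; infer_instance)
  exact ⟨w, by rw [← cancel_epi w, reassoc_of% hw, Category.comp_id], hw⟩

lemma IsRetraction.comp_isIso {𝒞 : Type*} [Category 𝒞] {N P T : 𝒞} {r : N ⟶ P}
    (hr : IsRetraction r) (t : P ⟶ T) [IsIso t] : IsRetraction (r ≫ t) := by
  obtain ⟨s, hs⟩ := hr
  exact ⟨inv t ≫ s, by simp [reassoc_of% hs]⟩

lemma FullyCoinvariant.comp_isIso {𝒞 : Type*} [Category 𝒞] {N P T : 𝒞} {r : N ⟶ P}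
    (hr : FullyCoinvariant r) (t : P ⟶ T) [IsIso t] : FullyCoinvariant (r ≫ t) := by
  intro h
  obtain ⟨β, hβ⟩ := hr h
  exact ⟨inv t ≫ β ≫ t, by simp [reassoc_of% hβ]⟩

lemma TNonsingular.comp_eq_zero {M N P : C} (hT : TNonsingular M N) {f : M ⟶ N}
    {r : N ⟶ P} (hr : IsRetraction r) {t : P ⟶ cokernel f} (ht : SuperfluousEpi t)
    (hπ : cokernel.π f = r ≫ t) : f ≫ r = 0 := by
  obtain ⟨s, hs⟩ := hr
  have hfrt : (f ≫ r) ≫ t = 0 := by rw [Category.assoc, ← hπ, cokernel.condition]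
  have hfrs : f ≫ r ≫ s = 0 := by
    simpa using hT _ (superfluousEpi_cokernel_π_comp ht hfrt s)
  rw [← Category.comp_id (f ≫ r), ← hs, Category.assoc, reassoc_of% hfrs, zero_comp]

theorem stmt7 (M N : C) :
    (DualStronglyCSRickart M N ∧ TNonsingular M N) ↔ DualStronglyRickart M N := by
  constructor
  · rintro ⟨hCS, hT⟩ f
    obtain ⟨P, r, t, hr, hrc, ht, hπ⟩ := hCS f
    have hw : cokernel.desc f r (hT.comp_eq_zero hr ht hπ) ≫ t = 𝟙 _ := by
      rw [← cancel_epi (cokernel.π f), cokernel.π_desc_assoc, ← hπ, Category.comp_id]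
    have := ht.isIso_of_comp_eq_id hw
    rw [hπ]
    exact ⟨hr.comp_isIso t, hrc.comp_isIso t⟩
  · intro hDR
    refine ⟨fun f => ?_, fun f hf => ?_⟩
    · exact ⟨_, _, 𝟙 _, (hDR f).1, (hDR f).2, superfluousEpi_id _,
        (Category.comp_id _).symm⟩
    · obtain ⟨s, hs⟩ := (hDR f).1
      have := hf.isIso_of_comp_eq_id hs
      exact zero_of_comp_mono (cokernel.π f) (cokernel.condition f)
end

section
/- Let r : M ⟶ M' be a retraction (split epimorphism) and s : N' ⟶ N a monomorphism in an abelian category 𝒜. If N is strongly M-CS-Rickart, then N' is strongly M'-CS-Rickart. -/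
open CategoryTheory CategoryTheory.Limits

universe w v u

variable {C : Type u} [Category.{v} C] [Abelian C]

theorem stmt8 {M M' N N' : C} (r : M ⟶ M') (hr : IsRetraction r)
    (s : N' ⟶ N) (hs : Mono s) (h : StronglyCSRickart M N) :
    StronglyCSRickart M' N' := by
  obtain ⟨u, hu⟩ := hr
  intro f
  obtain ⟨L, e, t, he, ⟨p, hp⟩, hfi, hker⟩ := h (r ≫ f ≫ s)
  have ht : Mono t := by
    refine ⟨fun {Z} a b hab => ?_⟩
    have := congrArg (fun z => z ≫ p) hab
    simpa [Category.assoc, hp] using this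
  obtain ⟨α, hα⟩ := hfi (r ≫ u)
  have hαt : t ≫ r ≫ u = α ≫ t := by simpa using hα
  have hidem : α ≫ α = α := by
    rw [← cancel_mono t]
    calc (α ≫ α) ≫ t = α ≫ (α ≫ t) := by rw [Category.assoc]
    _ = α ≫ t ≫ r ≫ u := by rw [hαt]
    _ = (α ≫ t) ≫ r ≫ u := by simp [Category.assoc]
    _ = (t ≫ r ≫ u) ≫ r ≫ u := by rw [hαt]
    _ = t ≫ r ≫ (u ≫ r) ≫ u := by simp [Category.assoc]
    _ = t ≫ r ≫ u := by rw [hu]; simp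
    _ = α ≫ t := hαt
  set ι : kernel (𝟙 L - α) ⟶ L := kernel.ι _ with hιdef
  have hcond : α ≫ (𝟙 L - α) = 0 := by
    simp [Preadditive.comp_sub, hidem]
  set π : L ⟶ kernel (𝟙 L - α) := kernel.lift _ α hcond with hπdef
  have hπι : π ≫ ι = α := kernel.lift_ι _ _ _
  have hι0 : ι ≫ (𝟙 L - α) = 0 := kernel.condition _
  have hια : ι ≫ α = ι := by
    have h1 : ι - ι ≫ α = 0 := by
      simpa [Preadditive.comp_sub] using hι0
    have := sub_eq_zero.mp h1
    exact this.symm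
  have hιπ : ι ≫ π = 𝟙 _ := by
    rw [← cancel_mono ι]
    rw [Category.assoc, hπι, hια, Category.id_comp]
  set t' : kernel (𝟙 L - α) ⟶ M' := ι ≫ t ≫ r with ht'def
  have hιtr : ι ≫ t ≫ r ≫ u = ι ≫ t := by
    rw [hαt, ← Category.assoc, hια]
  have hkcond : (kernel.ι f ≫ u) ≫ (r ≫ f ≫ s) = 0 := by
    rw [Category.assoc, ← Category.assoc u r, hu, Category.id_comp,
      ← Category.assoc, kernel.condition, zero_comp]
  set k : kernel f ⟶ kernel (r ≫ f ≫ s) := kernel.lift _ _ hkcond with hkdef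
  have hk : k ≫ kernel.ι (r ≫ f ≫ s) = kernel.ι f ≫ u := kernel.lift_ι _ _ _
  set e' : kernel f ⟶ kernel (𝟙 L - α) := k ≫ e ≫ π with he'def
  have hket : k ≫ e ≫ t = kernel.ι f ≫ u := by
    rw [← hker, hk]
  have hfac : kernel.ι f = e' ≫ t' := by
    have : e' ≫ t' = kernel.ι f := by
      rw [he'def, ht'def]
      simp only [Category.assoc]
      slice_lhs 3 4 => rw [hπι]
      slice_lhs 3 4 => rw [← hαt]
      slice_lhs 5 6 => rw [hu]
      slice_lhs 2 3 => rw [← hker]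
      slice_lhs 1 2 => rw [hk]
      slice_lhs 2 3 => rw [hu]
      simp
    exact this.symm
  refine ⟨kernel (𝟙 L - α), e', t', ⟨?_, ?_⟩, ⟨u ≫ p ≫ π, ?_⟩, ?_, hfac⟩
  · -- Mono e'
    have : Mono (e' ≫ t') := by rw [← hfac]; infer_instance
    exact mono_of_mono e' t'
  · -- essential
    intro P h' hmono
    set h'' : L ⟶ P ⊞ L := biprod.lift (π ≫ h') (𝟙 L - α) with h''def
    have hmono'' : Mono (e ≫ h'') := by
      rw [Preadditive.mono_iff_cancel_zero]
      intro X x hx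
      have hx1 : x ≫ e ≫ π ≫ h' = 0 := by
        have := congrArg (fun z => z ≫ (biprod.fst : P ⊞ L ⟶ P)) hx
        simpa [h''def, Category.assoc] using this
      have hx2 : x ≫ e ≫ α = x ≫ e := by
        have := congrArg (fun z => z ≫ (biprod.snd : P ⊞ L ⟶ L)) hx
        simp only [h''def, Category.assoc, biprod.lift_snd, zero_comp] at this
        have h2 : x ≫ e - x ≫ e ≫ α = 0 := by
          simpa [Preadditive.comp_sub] using this
        exact (sub_eq_zero.mp h2).symm
      have hycond : (x ≫ kernel.ι (r ≫ f ≫ s) ≫ r) ≫ f = 0 := by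
        rw [← cancel_mono s]
        simp only [Category.assoc, zero_comp]
        rw [kernel.condition]
        simp
      set y : X ⟶ kernel f := kernel.lift f _ hycond with hydef
      have hy : y ≫ kernel.ι f = x ≫ kernel.ι (r ≫ f ≫ s) ≫ r :=
        kernel.lift_ι _ _ _
      have hyk : y ≫ k = x := by
        rw [← cancel_mono (kernel.ι (r ≫ f ≫ s))]
        rw [Category.assoc, hk, ← Category.assoc, hy]
        calc (x ≫ kernel.ι (r ≫ f ≫ s) ≫ r) ≫ u
            = x ≫ (e ≫ t) ≫ r ≫ u := by rw [← hker]; simp [Category.assoc]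
        _ = x ≫ e ≫ (t ≫ r ≫ u) := by simp [Category.assoc]
        _ = x ≫ e ≫ α ≫ t := by rw [hαt]
        _ = (x ≫ e ≫ α) ≫ t := by simp [Category.assoc]
        _ = (x ≫ e) ≫ t := by rw [hx2]
        _ = x ≫ kernel.ι (r ≫ f ≫ s) := by rw [hker]; simp [Category.assoc]
      have hy0 : y = 0 := by
        have : y ≫ (e' ≫ h') = 0 := by
          rw [he'def]
          calc y ≫ (k ≫ e ≫ π) ≫ h' = (y ≫ k) ≫ e ≫ π ≫ h' := by
                simp only [Category.assoc]
          _ = x ≫ e ≫ π ≫ h' := by rw [hyk]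
          _ = 0 := hx1
        exact zero_of_comp_mono _ this
      rw [← hyk, hy0, zero_comp]
    have hmonoh'' : Mono h'' := he.2 h'' hmono''
    have hιh'' : ι ≫ h'' = biprod.lift h' 0 := by
      apply biprod.hom_ext
      · simp only [h''def, Category.assoc, biprod.lift_fst]
        rw [← Category.assoc, hιπ, Category.id_comp]
      · simp [h''def, hι0]
    have hmonolift : Mono (biprod.lift h' (0 : kernel (𝟙 L - α) ⟶ L)) := by
      rw [← hιh'']
      exact mono_comp _ _
    refine ⟨fun {Z} a b hab => ?_⟩
    have : a ≫ biprod.lift h' (0 : kernel (𝟙 L - α) ⟶ L)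
        = b ≫ biprod.lift h' 0 := by
      apply biprod.hom_ext <;> simp [hab]
    exact (cancel_mono _).mp this
  · -- section
    rw [ht'def]
    calc (ι ≫ t ≫ r) ≫ u ≫ p ≫ π = (ι ≫ t ≫ r ≫ u) ≫ p ≫ π := by
          simp only [Category.assoc]
    _ = (ι ≫ t) ≫ p ≫ π := by rw [hιtr]
    _ = ι ≫ (t ≫ p) ≫ π := by simp only [Category.assoc]
    _ = ι ≫ π := by rw [hp, Category.id_comp]
    _ = 𝟙 _ := hιπ
  · -- fully invariant
    intro h'
    obtain ⟨β, hβ⟩ := hfi (r ≫ h' ≫ u)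
    refine ⟨ι ≫ β ≫ π, ?_⟩
    rw [ht'def]
    have : (ι ≫ β ≫ π) ≫ ι ≫ t ≫ r = (ι ≫ t ≫ r) ≫ h' := by
      simp only [Category.assoc]
      slice_lhs 3 4 => rw [hπι]
      slice_lhs 3 4 => rw [← hαt]
      slice_lhs 2 3 => rw [← hβ]
      simp [hu]
    exact this.symm
end

section
/- Let r : M ⟶ M' be an epimorphism and s : N' ⟶ N a section (split monomorphism) in an abelian category 𝒜. If N is dual strongly M-CS-Rickart, then N' is dual strongly M'-CS-Rickart. -/
open CategoryTheory CategoryTheory.Limits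

universe w v u

variable {C : Type u} [Category.{v} C] [Abelian C]

theorem stmt9 {M M' N N' : C} (r : M ⟶ M') (hr : Epi r)
    (s : N' ⟶ N) (hs : IsSection s) (h : DualStronglyCSRickart M N) :
    DualStronglyCSRickart M' N' := by
  intro f
  obtain ⟨p, hp⟩ := hs
  haveI : IsSplitMono s := ⟨⟨⟨p, hp⟩⟩⟩
  obtain ⟨P, ρ, t, ⟨σ, hσ⟩, hfc, ⟨htE, htS⟩, hπ⟩ := h (r ≫ f ≫ s)
  haveI : IsSplitEpi ρ := ⟨⟨⟨σ, hσ⟩⟩⟩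
  set k : kernel ρ ⟶ N := kernel.ι ρ with hkdef
  -- comparison isos between `cokernel (r ≫ f ≫ s)` and `cokernel (f ≫ s)`
  have ha0 : (r ≫ f ≫ s) ≫ cokernel.π (f ≫ s) = 0 := by
    rw [Category.assoc, cokernel.condition, comp_zero]
  set a : cokernel (r ≫ f ≫ s) ⟶ cokernel (f ≫ s) :=
    cokernel.desc _ (cokernel.π (f ≫ s)) ha0 with hadef
  have ha : cokernel.π (r ≫ f ≫ s) ≫ a = cokernel.π (f ≫ s) := cokernel.π_desc _ _ _
  have ha0' : (f ≫ s) ≫ cokernel.π (r ≫ f ≫ s) = 0 := by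
    rw [← cancel_epi r, comp_zero]
    simpa only [Category.assoc] using cokernel.condition (r ≫ f ≫ s)
  set a' : cokernel (f ≫ s) ⟶ cokernel (r ≫ f ≫ s) :=
    cokernel.desc _ (cokernel.π (r ≫ f ≫ s)) ha0' with ha'def
  have ha' : cokernel.π (f ≫ s) ≫ a' = cokernel.π (r ≫ f ≫ s) := cokernel.π_desc _ _ _
  have haa' : a ≫ a' = 𝟙 _ := by
    rw [← cancel_epi (cokernel.π (r ≫ f ≫ s)), Category.comp_id, reassoc_of% ha, ha']
  haveI : Epi a' := epi_of_epi_fac ha'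
  -- `k` is killed by `cokernel.π (f ≫ s)`
  have hkfs : k ≫ cokernel.π (f ≫ s) = 0 := by
    rw [hkdef, ← ha, hπ]
    simp only [Category.assoc, kernel.condition_assoc, zero_comp]
  set lam : kernel ρ ⟶ Abelian.image (f ≫ s) :=
    kernel.lift (cokernel.π (f ≫ s)) k hkfs with hlamdef
  have hlam : lam ≫ Abelian.image.ι (f ≫ s) = k := kernel.lift_ι _ _ _
  -- `k` factors through `s`
  have hfs1 : (f ≫ s) ≫ (𝟙 N - p ≫ s) = 0 := by
    simp only [Preadditive.comp_sub, Category.comp_id, Category.assoc]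
    rw [← Category.assoc s p, hp, Category.id_comp, sub_self]
  have hm1 : Abelian.image.ι (f ≫ s) ≫ (𝟙 N - p ≫ s) = 0 :=
    Abelian.image_ι_comp_eq_zero hfs1
  have hks : k ≫ (p ≫ s) = k := by
    have : k ≫ (𝟙 N - p ≫ s) = 0 := by rw [← hlam, Category.assoc, hm1, comp_zero]
    rw [Preadditive.comp_sub, Category.comp_id, sub_eq_zero] at this
    exact this.symm
  set k' : kernel ρ ⟶ N' := k ≫ p with hk'def
  have hk's : k' ≫ s = k := by rw [hk'def, Category.assoc]; exact hks
  -- `k'` is killed by `cokernel.π f`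
  have hmpf : Abelian.image.ι (f ≫ s) ≫ p ≫ cokernel.π f = 0 := by
    apply Abelian.image_ι_comp_eq_zero
    simp only [Category.assoc]
    rw [reassoc_of% hp]
    exact cokernel.condition f
  have hk'f : k' ≫ cokernel.π f = 0 := by
    rw [hk'def, ← hlam, Category.assoc, Category.assoc, hmpf, comp_zero]
  set π' : N' ⟶ cokernel k' := cokernel.π k' with hπ'def
  set t' : cokernel k' ⟶ cokernel f := cokernel.desc k' (cokernel.π f) hk'f with ht'def
  have hπt' : π' ≫ t' = cokernel.π f := cokernel.π_desc _ _ _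
  -- the maps `v`, `w` between `P` and `cokernel k'`
  have hv0 : kernel.ι ρ ≫ (p ≫ π') = 0 := by
    rw [← Category.assoc]; exact cokernel.condition k'
  set v : P ⟶ cokernel k' := Abelian.epiDesc ρ (p ≫ π') hv0 with hvdef
  have hv : ρ ≫ v = p ≫ π' := Abelian.comp_epiDesc _ _ _
  have hw0 : k' ≫ (s ≫ ρ) = 0 := by
    rw [← Category.assoc, hk's, kernel.condition]
  set w : cokernel k' ⟶ P := cokernel.desc k' (s ≫ ρ) hw0 with hwdef
  have hw : π' ≫ w = s ≫ ρ := cokernel.π_desc _ _ _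
  have hwv : w ≫ v = 𝟙 _ := by
    rw [← cancel_epi π', reassoc_of% hw, hv, reassoc_of% hp, Category.comp_id]
  refine ⟨cokernel k', π', t', ⟨w ≫ σ ≫ p, ?_⟩, ?_, ⟨?_, ?_⟩, hπt'.symm⟩
  · -- `π'` is a retraction
    simp only [Category.assoc]
    rw [← hv, reassoc_of% hσ]
    exact hwv
  · -- `π'` is fully coinvariant
    intro h'
    obtain ⟨β, hβ⟩ := hfc (p ≫ h' ≫ s)
    have hlift0 : (k ≫ (p ≫ h' ≫ s)) ≫ ρ = 0 := by
      rw [Category.assoc, hβ, ← Category.assoc, kernel.condition, zero_comp]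
    set u : kernel ρ ⟶ kernel ρ := kernel.lift ρ (k ≫ (p ≫ h' ≫ s)) hlift0 with hudef
    have hu : u ≫ k = k ≫ (p ≫ h' ≫ s) := kernel.lift_ι _ _ _
    have hk'h : k' ≫ h' = u ≫ k' := by
      rw [← cancel_mono s]
      simp only [Category.assoc]
      rw [hk's, hu, hk'def]
      simp only [Category.assoc]
    have hcond : k' ≫ (h' ≫ π') = 0 := by
      rw [← Category.assoc, hk'h, Category.assoc, cokernel.condition, comp_zero]
    exact ⟨cokernel.desc k' (h' ≫ π') hcond, (cokernel.π_desc _ _ _).symm⟩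
  · -- `t'` is epi
    exact epi_of_epi_fac hπt'
  · -- `t'` is superfluous
    intro X h₀ hE
    have hj0 : f ≫ (s ≫ cokernel.π (f ≫ s)) = 0 := by
      rw [← Category.assoc]; exact cokernel.condition _
    set j : cokernel f ⟶ cokernel (f ≫ s) := cokernel.desc f (s ≫ cokernel.π (f ≫ s)) hj0
      with hjdef
    have hj : cokernel.π f ≫ j = s ≫ cokernel.π (f ≫ s) := cokernel.π_desc _ _ _
    have hwta : w ≫ t ≫ a = t' ≫ j := by
      rw [← cancel_epi π', reassoc_of% hw, ← reassoc_of% hπ, ha, reassoc_of% hπt', hj]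
    have hδ0 : (𝟙 N - p ≫ s) ≫ p = 0 := by
      simp only [Preadditive.sub_comp, Category.id_comp, Category.assoc, hp, Category.comp_id,
        sub_self]
    set δ : N ⟶ kernel p := kernel.lift p (𝟙 N - p ≫ s) hδ0 with hδdef
    have hδ : δ ≫ kernel.ι p = 𝟙 N - p ≫ s := kernel.lift_ι _ _ _
    set Φ : X ⊞ kernel p ⟶ P := biprod.desc (h₀ ≫ w) (kernel.ι p ≫ ρ) with hΦdef
    have hψ : Epi (Φ ≫ (t ≫ a)) := by
      rw [Preadditive.epi_iff_cancel_zero]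
      intro Z u hu0
      have hinl : h₀ ≫ w ≫ t ≫ a ≫ u = 0 := by
        have := biprod.inl ≫= hu0
        rw [comp_zero] at this
        simpa only [hΦdef, Category.assoc, biprod.inl_desc_assoc] using this
      have h1 : (h₀ ≫ t') ≫ j ≫ u = 0 := by
        rw [Category.assoc, ← reassoc_of% hwta]
        exact hinl
      haveI : Epi (h₀ ≫ t') := hE
      have h2 : j ≫ u = 0 := by
        rw [← cancel_epi (h₀ ≫ t'), comp_zero]
        exact h1
      have h3 : s ≫ cokernel.π (f ≫ s) ≫ u = 0 := by
        rw [← Category.assoc, ← hj, Category.assoc, h2, comp_zero]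
      have h4 : kernel.ι p ≫ cokernel.π (f ≫ s) ≫ u = 0 := by
        have hinr : kernel.ι p ≫ ρ ≫ t ≫ a ≫ u = 0 := by
          have := biprod.inr ≫= hu0
          rw [comp_zero] at this
          simpa only [hΦdef, Category.assoc, biprod.inr_desc_assoc] using this
        rw [← ha, hπ]
        simp only [Category.assoc]
        exact hinr
      have h5 : cokernel.π (f ≫ s) ≫ u = 0 := by
        have hid : (𝟙 N : N ⟶ N) = p ≫ s + δ ≫ kernel.ι p := by rw [hδ]; abel
        have hz : (p ≫ s + δ ≫ kernel.ι p) ≫ cokernel.π (f ≫ s) ≫ u = 0 := by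
          simp only [Preadditive.add_comp, Category.assoc]
          rw [h3, h4, comp_zero, comp_zero, add_zero]
        rw [← Category.id_comp (cokernel.π (f ≫ s) ≫ u), hid]
        exact hz
      exact zero_of_epi_comp (cokernel.π (f ≫ s)) h5
    have hΦt : Epi (Φ ≫ t) := by
      have heq : Φ ≫ t = (Φ ≫ (t ≫ a)) ≫ a' := by
        simp only [Category.assoc, haa', Category.comp_id]
      rw [heq]
      exact epi_comp _ _
    have hΦ : Epi Φ := htS Φ hΦt
    haveI : IsSplitEpi v := ⟨⟨⟨w, hwv⟩⟩⟩
    have hΦv : Φ ≫ v = biprod.fst ≫ h₀ := by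
      apply biprod.hom_ext'
      · simp only [hΦdef, biprod.inl_desc_assoc, biprod.inl_fst_assoc, Category.assoc]
        rw [hwv, Category.comp_id]
      · simp only [hΦdef, biprod.inr_desc_assoc, biprod.inr_fst_assoc, Category.assoc, zero_comp]
        rw [hv, ← Category.assoc, kernel.condition, zero_comp]
    haveI : Epi ((biprod.fst : X ⊞ kernel p ⟶ X) ≫ h₀) := by
      rw [← hΦv]; exact epi_comp _ _
    exact epi_of_epi (biprod.fst : X ⊞ kernel p ⟶ X) h₀
end

section
/- Let M be an object of an abelian category 𝒜. Then M is strictly SIP-extending if and only if for any two direct summand subobjects U and V of M, the meet U ⊓ V is essential in a fully invariant direct summand subobject of M. -/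
open CategoryTheory CategoryTheory.Limits

universe w v u

variable {C : Type u} [Category.{v} C] [Abelian C]

theorem stmt10 (M : C) :
    StrictlySIPExtending M ↔
      ∀ U V : Subobject M, SubDirectSummand U → SubDirectSummand V →
        ∃ W, SubDirectSummand W ∧ SubFullyInvariant W ∧ EssentialIn (U ⊓ V) W := by
  constructor
  · intro h U V hU hV
    exact h U V ⟨U, hU, le_refl U, fun X hX hXU => by rwa [inf_eq_left.mpr hX] at hXU⟩
      ⟨V, hV, le_refl V, fun X hX hXV => by rwa [inf_eq_left.mpr hX] at hXV⟩
  · rintro h A B ⟨U, hU, hAU, hAess⟩ ⟨V, hV, hBV, hBess⟩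
    obtain ⟨W, hW, hWfi, hUVW, hUVess⟩ := h U V hU hV
    refine ⟨W, hW, hWfi, le_trans (inf_le_inf hAU hBV) hUVW, fun X hXW hXAB => ?_⟩
    -- First show X ⊓ (U ⊓ V) = ⊥
    have h1 : X ⊓ (U ⊓ V) ⊓ A = ⊥ := by
      apply hBess (X ⊓ (U ⊓ V) ⊓ A)
      · exact le_trans inf_le_left (le_trans inf_le_right inf_le_right)
      · rw [← le_bot_iff, ← hXAB]
        exact le_inf (le_trans inf_le_left (le_trans inf_le_left inf_le_left))
          (le_inf (le_trans inf_le_left inf_le_right) inf_le_right)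
    have h2 : X ⊓ (U ⊓ V) = ⊥ := by
      apply hAess (X ⊓ (U ⊓ V))
      · exact le_trans inf_le_right inf_le_left
      · exact h1
    exact hUVess X hXW h2
end

section
/- Let M and N be objects of an abelian category 𝒜 such that every direct summand of M is isomorphic to a subobject of N (i.e., for every section u : U ⟶ M there exists a monomorphism U ⟶ N). If N is strongly M-CS-Rickart, then M is strictly SIP-extending. -/
open CategoryTheory CategoryTheory.Limits

universe w v u

variable {C : Type u} [Category.{v} C] [Abelian C]

section Aux11

variable {M N : C}

private lemma aux11_sub_comp {U : C} (u : U ⟶ M) (p : M ⟶ U) (hp : u ≫ p = 𝟙 U) :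
    (𝟙 M - p ≫ u) ≫ (p ≫ u) = 0 := by
  simp [Preadditive.sub_comp, reassoc_of% hp]

private lemma aux11_compl_section {U : C} (u : U ⟶ M) (p : M ⟶ U) (hp : u ≫ p = 𝟙 U) :
    kernel.ι (p ≫ u) ≫ kernel.lift (p ≫ u) (𝟙 M - p ≫ u) (aux11_sub_comp u p hp) = 𝟙 _ := by
  rw [← cancel_mono (kernel.ι (p ≫ u)), Category.assoc, kernel.lift_ι, Category.id_comp,
    Preadditive.comp_sub, Category.comp_id, kernel.condition, sub_zero]

private lemma aux11_weakDuo
    (hsub : ∀ ⦃U : C⦄ (u : U ⟶ M), IsSection u → ∃ m : U ⟶ N, Mono m)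
    (h : StronglyCSRickart M N) : WeakDuo M := by
  intro U u hu
  obtain ⟨p, hp⟩ := hu
  set r : M ⟶ kernel (p ≫ u) := kernel.lift (p ≫ u) (𝟙 M - p ≫ u) (aux11_sub_comp u p hp)
    with hrdef
  have hrι : r ≫ kernel.ι (p ≫ u) = 𝟙 M - p ≫ u := kernel.lift_ι _ _ _
  have hιr : kernel.ι (p ≫ u) ≫ r = 𝟙 _ := aux11_compl_section u p hp
  obtain ⟨m, hm⟩ := hsub (kernel.ι (p ≫ u)) ⟨r, hιr⟩
  haveI : Mono m := hm
  obtain ⟨L, e', s, hess, _, hsfi, hker⟩ := h (r ≫ m)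
  have hur : u ≫ r = 0 := by
    rw [← cancel_mono (kernel.ι (p ≫ u)), Category.assoc, hrι, zero_comp, Preadditive.comp_sub,
      Category.comp_id, ← Category.assoc, hp, Category.id_comp, sub_self]
  have huf : u ≫ r ≫ m = 0 := by rw [← Category.assoc, hur, zero_comp]
  set k : kernel (r ≫ m) ⟶ M := kernel.ι (r ≫ m) with hkdef
  set l : U ⟶ kernel (r ≫ m) := kernel.lift (r ≫ m) u huf with hldef
  have hlk : l ≫ k = u := kernel.lift_ι _ _ _
  have hkr : k ≫ r = 0 := by
    rw [← cancel_mono m, Category.assoc, hkdef, kernel.condition, zero_comp]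
  have hk : k ≫ p ≫ u = k := by
    have h1 : k ≫ (𝟙 M - p ≫ u) = 0 := by rw [← hrι, ← Category.assoc, hkr, zero_comp]
    rw [Preadditive.comp_sub, Category.comp_id, sub_eq_zero] at h1
    exact h1.symm
  have hkl : k ≫ p ≫ l = 𝟙 (kernel (r ≫ m)) := by
    rw [← cancel_mono k]
    simp only [Category.assoc, hlk, Category.id_comp]
    exact hk
  set ρ : L ⟶ kernel (r ≫ m) := s ≫ p ≫ l with hρdef
  have he'ρ : e' ≫ ρ = 𝟙 (kernel (r ≫ m)) := by
    rw [hρdef, ← hkl, hker]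
    simp only [Category.assoc]
  obtain ⟨hmonoe', hessp⟩ := hess
  have hρmono : Mono ρ := hessp ρ (by rw [he'ρ]; infer_instance)
  have hρe' : ρ ≫ e' = 𝟙 L := by
    rw [← cancel_mono ρ, Category.assoc, he'ρ, Category.comp_id, Category.id_comp]
  intro hEnd
  obtain ⟨α, hα⟩ := hsfi hEnd
  refine ⟨l ≫ e' ≫ α ≫ ρ ≫ k ≫ p, ?_⟩
  calc u ≫ hEnd = l ≫ k ≫ hEnd := by rw [← Category.assoc, hlk]
    _ = l ≫ e' ≫ s ≫ hEnd := by rw [hker]; simp only [Category.assoc]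
    _ = l ≫ e' ≫ α ≫ s := by rw [hα]
    _ = l ≫ e' ≫ α ≫ (ρ ≫ e') ≫ s := by rw [hρe', Category.id_comp]
    _ = l ≫ e' ≫ α ≫ ρ ≫ k := by rw [hker]; simp only [Category.assoc]
    _ = l ≫ e' ≫ α ≫ ρ ≫ k ≫ p ≫ u := by rw [hk]
    _ = (l ≫ e' ≫ α ≫ ρ ≫ k ≫ p) ≫ u := by simp only [Category.assoc]

private lemma aux11_central (wd : WeakDuo M) {U : C} (u : U ⟶ M) (p : M ⟶ U)
    (hp : u ≫ p = 𝟙 U) (g : M ⟶ M) : (p ≫ u) ≫ g = g ≫ (p ≫ u) := by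
  obtain ⟨α, hα⟩ := wd u ⟨p, hp⟩ g
  obtain ⟨β, hβ⟩ := wd (kernel.ι (p ≫ u))
    ⟨kernel.lift (p ≫ u) (𝟙 M - p ≫ u) (aux11_sub_comp u p hp), aux11_compl_section u p hp⟩ g
  have hA : (p ≫ u) ≫ g ≫ (p ≫ u) = (p ≫ u) ≫ g := by
    simp only [Category.assoc, reassoc_of% hα, hα, reassoc_of% hp]
  have hB0 : (𝟙 M - p ≫ u) ≫ g ≫ (p ≫ u) = 0 := by
    rw [← kernel.lift_ι (p ≫ u) (𝟙 M - p ≫ u) (aux11_sub_comp u p hp)]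
    simp only [Category.assoc, reassoc_of% hβ, kernel.condition, comp_zero]
  rw [Preadditive.sub_comp, Category.id_comp, sub_eq_zero] at hB0
  rw [hA] at hB0
  exact hB0.symm

end Aux11

theorem stmt11 (M N : C)
    (hsub : ∀ ⦃U : C⦄ (u : U ⟶ M), IsSection u → ∃ m : U ⟶ N, Mono m)
    (h : StronglyCSRickart M N) : StrictlySIPExtending M := by
  have wd : WeakDuo M := aux11_weakDuo hsub h
  rintro A B ⟨U, hU, hAU⟩ ⟨V, hV, hBV⟩
  obtain ⟨p, hp⟩ := hU
  obtain ⟨q, hq⟩ := hV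
  have hcomm : (p ≫ U.arrow) ≫ (q ≫ V.arrow) = (q ≫ V.arrow) ≫ (p ≫ U.arrow) :=
    aux11_central wd U.arrow p hp (q ≫ V.arrow)
  have hgU : U.Factors ((q ≫ V.arrow) ≫ (p ≫ U.arrow)) := by
    rw [← Category.assoc]
    exact Subobject.factors_of_factors_right _ (Subobject.factors_self U)
  have hgV : V.Factors ((q ≫ V.arrow) ≫ (p ≫ U.arrow)) := by
    rw [← hcomm, ← Category.assoc]
    exact Subobject.factors_of_factors_right _ (Subobject.factors_self V)
  have hfac : (U ⊓ V).Factors ((q ≫ V.arrow) ≫ (p ≫ U.arrow)) :=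
    (Subobject.inf_factors _).mpr ⟨hgU, hgV⟩
  have haU : (U ⊓ V).arrow ≫ (p ≫ U.arrow) = (U ⊓ V).arrow := by
    rw [← Subobject.ofLE_arrow (inf_le_left : U ⊓ V ≤ U)]
    simp only [Category.assoc, reassoc_of% hp, Category.id_comp]
  have haV : (U ⊓ V).arrow ≫ (q ≫ V.arrow) = (U ⊓ V).arrow := by
    rw [← Subobject.ofLE_arrow (inf_le_right : U ⊓ V ≤ V)]
    simp only [Category.assoc, reassoc_of% hq, Category.id_comp]
  have hsec : IsSection (U ⊓ V).arrow := by
    refine ⟨Subobject.factorThru _ _ hfac, ?_⟩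
    rw [← cancel_mono (U ⊓ V).arrow, Category.assoc, Subobject.factorThru_arrow,
      Category.id_comp, ← Category.assoc, haV, haU]
  refine ⟨U ⊓ V, hsec, wd _ hsec, inf_le_inf hAU.1 hBV.1, ?_⟩
  intro X hX h0
  have h1 : X ⊓ A = ⊥ := by
    refine hBV.2 (X ⊓ A) (le_trans inf_le_left (hX.trans inf_le_right)) ?_
    rw [inf_assoc]
    exact h0
  exact hAU.2 X (hX.trans inf_le_left) h1
end

section
/- Every strongly self-CS-Rickart object of an abelian category 𝒜 is strictly SIP-extending. -/
open CategoryTheory CategoryTheory.Limits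

universe w v u

variable {C : Type u} [Category.{v} C] [Abelian C]

/- A direct summand `s : K ⟶ M` with retraction `p` is the kernel of `𝟙 - p ≫ s`, up to
isomorphism. The strongly CS-Rickart hypothesis factors that kernel as an essential monomorphism
followed by a fully invariant section; the essential monomorphism is split, hence an isomorphism,
so every direct summand is fully invariant. If `U` and `V` are direct summands with `V` fully
invariant, then `V` is stable under the projection onto `U`, so the composite of the projections
onto `V` and onto `U` lands in `U ⊓ V` and restricts to the identity there: `U ⊓ V` is a direct
summand. Essentiality of `A ⊓ B` in `U ⊓ V` is lattice theory. -/

omit [Abelian C] in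
theorem EssentialMono.isIso_of_comp_eq_id {K L : C} {e : K ⟶ L} (he : EssentialMono e)
    {t : L ⟶ K} (het : e ≫ t = 𝟙 K) : IsIso e := by
  have : Mono t := he.2 t (by rw [het]; infer_instance)
  refine ⟨t, het, (cancel_mono t).mp ?_⟩
  rw [Category.assoc, het, Category.comp_id, Category.id_comp]

omit [Abelian C] in
theorem FullyInvariant.of_factorization {A B M : C} {a : A ⟶ M} {b : B ⟶ M}
    (hinv : FullyInvariant b) (φ : A ⟶ B) (ψ : B ⟶ A) (ha : a = φ ≫ b)
    (hb : b = ψ ≫ a) :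
    FullyInvariant a := by
  intro g
  obtain ⟨α, hα⟩ := hinv g
  refine ⟨φ ≫ α ≫ ψ, ?_⟩
  calc a ≫ g = φ ≫ b ≫ g := by rw [ha, Category.assoc]
    _ = (φ ≫ α ≫ ψ) ≫ a := by rw [hα, hb]; simp only [Category.assoc]

theorem StronglyCSRickart.weakDuo {M : C} (h : StronglyCSRickart M M) : WeakDuo M := by
  rintro K s ⟨p, hp⟩
  set f : M ⟶ M := 𝟙 M - p ≫ s
  have hsf : s ≫ f = 0 := by simp [f, reassoc_of% hp]
  have hι : kernel.ι f ≫ p ≫ s = kernel.ι f := by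
    have := kernel.condition f
    rwa [Preadditive.comp_sub, Category.comp_id, sub_eq_zero, eq_comm] at this
  obtain ⟨L, e, σ, he, -, hσ, hfac⟩ := h f
  have : IsIso e := he.isIso_of_comp_eq_id (t := σ ≫ p ≫ kernel.lift f s hsf) <| by
    ext
    simp [← reassoc_of% hfac, hι]
  refine hσ.of_factorization (kernel.lift f s hsf ≫ e) (inv e ≫ kernel.ι f ≫ p) ?_ ?_
  · simp [← hfac]
  · rw [Category.assoc, Category.assoc, hι, hfac, IsIso.inv_hom_id_assoc]

omit [Abelian C] in
theorem Subobject.arrow_comp_retraction_comp_arrow_of_le {M : C} {U W : Subobject M}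
    {p : M ⟶ (U : C)} (hp : U.arrow ≫ p = 𝟙 _) (hWU : W ≤ U) :
    W.arrow ≫ p ≫ U.arrow = W.arrow := by
  rw [← Subobject.ofLE_arrow hWU, Category.assoc, reassoc_of% hp]

theorem SubDirectSummand.inf {M : C} {U V : Subobject M} (hU : SubDirectSummand U)
    (hV : SubDirectSummand V) (hVinv : SubFullyInvariant V) : SubDirectSummand (U ⊓ V) := by
  obtain ⟨pU, hpU⟩ := hU
  obtain ⟨pV, hpV⟩ := hV
  obtain ⟨α, hα⟩ := hVinv (pU ≫ U.arrow)
  set g : M ⟶ M := pV ≫ V.arrow ≫ pU ≫ U.arrow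
  have hgU : U.Factors g := (Subobject.factors_iff _ _).mpr ⟨pV ≫ V.arrow ≫ pU, by simp [g]⟩
  have hgV : V.Factors g := (Subobject.factors_iff _ _).mpr ⟨pV ≫ α, by simp [g, hα]⟩
  have hg : (U ⊓ V).Factors g := Subobject.inf_factors _ |>.mpr ⟨hgU, hgV⟩
  refine ⟨(U ⊓ V).factorThru g hg, (cancel_mono (U ⊓ V).arrow).mp ?_⟩
  simp only [Category.assoc, Subobject.factorThru_arrow, Category.id_comp, g]
  rw [reassoc_of% Subobject.arrow_comp_retraction_comp_arrow_of_le hpV inf_le_right,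
    Subobject.arrow_comp_retraction_comp_arrow_of_le hpU inf_le_left]

theorem EssentialIn.inf {M : C} {A B U V : Subobject M} (hA : EssentialIn A U)
    (hB : EssentialIn B V) : EssentialIn (A ⊓ B) (U ⊓ V) := by
  refine ⟨inf_le_inf hA.1 hB.1, fun X hX hXAB ↦ hA.2 X (hX.trans inf_le_left) ?_⟩
  refine hB.2 _ (inf_le_left.trans (hX.trans inf_le_right)) ?_
  rwa [inf_assoc]

theorem stmt12 (M : C) (h : StronglyCSRickart M M) : StrictlySIPExtending M := by
  rintro A B ⟨U, hU, hAU⟩ ⟨V, hV, hBV⟩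
  have hUV : SubDirectSummand (U ⊓ V) := hU.inf hV (h.weakDuo _ hV)
  exact ⟨U ⊓ V, hUV, h.weakDuo _ hUV, hAU.inf hBV⟩
end

section
/- Let A and B be objects of an abelian category 𝒜. If the biproduct A ⊞ B is strictly SIP-extending, then B is strongly A-CS-Rickart. -/
open CategoryTheory CategoryTheory.Limits

universe w v u

variable {C : Type u} [Category.{v} C] [Abelian C]

theorem stmt13 (A B : C) (h : StrictlySIPExtending (A ⊞ B)) :
    StronglyCSRickart A B := by
  intro f
  -- the graph morphism
  set g : A ⟶ A ⊞ B := biprod.lift (𝟙 A) f with hg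
  have hgmono : Mono g := mono_of_mono_fac (biprod.lift_fst (𝟙 A) f)
  haveI := hgmono
  set X : Subobject (A ⊞ B) := Subobject.mk g with hX
  set Y : Subobject (A ⊞ B) := Subobject.mk (biprod.inl : A ⟶ A ⊞ B) with hY
  have hkmono : Mono (kernel.ι f ≫ (biprod.inl : A ⟶ A ⊞ B)) := mono_comp _ _
  set K : Subobject (A ⊞ B) := Subobject.mk (kernel.ι f ≫ (biprod.inl : A ⟶ A ⊞ B)) with hK
  -- auxiliary: a subobject with zero arrow is ⊥
  have bot_of_arrow : ∀ (V : Subobject (A ⊞ B)), V.arrow = 0 → V = ⊥ := by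
    intro V hV
    rw [← Subobject.mk_arrow V, Subobject.mk_eq_bot_iff_zero]
    exact hV
  -- X is a direct summand
  have hXds : SubDirectSummand X := by
    refine ⟨biprod.fst ≫ (Subobject.underlyingIso g).inv, ?_⟩
    rw [← Subobject.underlyingIso_hom_comp_eq_mk g]
    simp only [hg, Category.assoc, biprod.lift_fst_assoc, Category.id_comp, Iso.hom_inv_id]
  have hYds : SubDirectSummand Y := by
    refine ⟨biprod.fst ≫ (Subobject.underlyingIso (biprod.inl : A ⟶ A ⊞ B)).inv, ?_⟩
    rw [← Subobject.underlyingIso_hom_comp_eq_mk (biprod.inl : A ⟶ A ⊞ B)]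
    simp only [Category.assoc, biprod.inl_fst_assoc, Iso.hom_inv_id]
  have hXess : EssentialIn X X := ⟨le_refl _, fun Z hZ h0 => by rwa [inf_eq_left.mpr hZ] at h0⟩
  have hYess : EssentialIn Y Y := ⟨le_refl _, fun Z hZ h0 => by rwa [inf_eq_left.mpr hZ] at h0⟩
  obtain ⟨W, hWds, hWfi, hWess⟩ := h X Y ⟨X, hXds, hXess⟩ ⟨Y, hYds, hYess⟩
  -- identify X ⊓ Y with K
  have hXY : X ⊓ Y = K := by
    apply le_antisymm
    · -- X ⊓ Y ≤ K
      have h1 : X ⊓ Y ≤ X := inf_le_left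
      have h2 : X ⊓ Y ≤ Y := inf_le_right
      set u := Subobject.ofLEMk (X ⊓ Y) g h1 with hu
      set v := Subobject.ofLEMk (X ⊓ Y) (biprod.inl : A ⟶ A ⊞ B) h2 with hv
      have hu1 : u ≫ g = (X ⊓ Y).arrow := Subobject.ofLEMk_comp h1
      have hv1 : v ≫ biprod.inl = (X ⊓ Y).arrow := Subobject.ofLEMk_comp h2
      have huv : u = v := by
        have h3 : u ≫ g ≫ biprod.fst = v ≫ (biprod.inl : A ⟶ A ⊞ B) ≫ biprod.fst := by
          rw [← Category.assoc, ← Category.assoc, hu1, hv1]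
        simpa [hg] using h3
      have huf : u ≫ f = 0 := by
        have h4 : u ≫ g ≫ biprod.snd = v ≫ (biprod.inl : A ⟶ A ⊞ B) ≫ biprod.snd := by
          rw [← Category.assoc, hu1, ← Category.assoc, hv1]
        simpa [hg] using h4
      refine Subobject.le_mk_of_comm (kernel.lift f u huf) ?_
      rw [← hv1, ← huv, ← Category.assoc, kernel.lift_ι]
    · exact le_inf
        (Subobject.mk_le_mk_of_comm (kernel.ι f) (by apply biprod.hom_ext <;> simp [hg]))
        (Subobject.mk_le_mk_of_comm (kernel.ι f) rfl)
  rw [hXY] at hWess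
  obtain ⟨hKW, hEss⟩ := hWess
  -- the part of W killed by biprod.fst
  haveI hZmono : Mono (kernel.ι (W.arrow ≫ biprod.fst) ≫ W.arrow) := mono_comp _ _
  have hZ1W : Subobject.mk (kernel.ι (W.arrow ≫ biprod.fst) ≫ W.arrow) ≤ W :=
    Subobject.mk_le_of_comm (kernel.ι (W.arrow ≫ biprod.fst)) rfl
  have hZ1bot : Subobject.mk (kernel.ι (W.arrow ≫ biprod.fst) ≫ W.arrow) ⊓ K = ⊥ := by
    set V := Subobject.mk (kernel.ι (W.arrow ≫ biprod.fst) ≫ W.arrow) ⊓ K with hV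
    have a1 : V ≤ Subobject.mk (kernel.ι (W.arrow ≫ biprod.fst) ≫ W.arrow) := inf_le_left
    have a2 : V ≤ K := inf_le_right
    have hv1 := Subobject.ofLEMk_comp a1
    have hv2 := Subobject.ofLEMk_comp a2
    apply bot_of_arrow
    have d1 : kernel.ι (W.arrow ≫ (biprod.fst : A ⊞ B ⟶ A)) ≫ W.arrow ≫ (biprod.fst : A ⊞ B ⟶ A) = 0 := by
      exact kernel.condition _
    have c1 : V.arrow ≫ biprod.fst = 0 := by
      rw [← hv1, Category.assoc, Category.assoc, d1, comp_zero]
    have c2 : V.arrow ≫ biprod.snd = 0 := by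
      rw [← hv2, Category.assoc, Category.assoc, biprod.inl_snd, comp_zero, comp_zero]
    have := biprod.total (X := A) (Y := B)
    calc V.arrow = V.arrow ≫ 𝟙 (A ⊞ B) := (Category.comp_id _).symm
      _ = V.arrow ≫ (biprod.fst ≫ biprod.inl + biprod.snd ≫ biprod.inr) := by rw [this]
      _ = 0 := by rw [Preadditive.comp_add, ← Category.assoc, ← Category.assoc, c1, c2]; simp
  have hZ1 : kernel.ι (W.arrow ≫ biprod.fst) ≫ W.arrow = 0 := by
    have := hEss _ hZ1W hZ1bot
    rwa [Subobject.mk_eq_bot_iff_zero] at this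
  have hkι : kernel.ι (W.arrow ≫ biprod.fst) = 0 := zero_of_comp_mono W.arrow hZ1
  haveI hmono_sfst : Mono (W.arrow ≫ biprod.fst) := Abelian.mono_of_kernel_ι_eq_zero _ hkι
  -- W.arrow ≫ snd = 0
  obtain ⟨β, hβ⟩ := hWfi (biprod.snd ≫ biprod.inr)
  have hβ0 : β = 0 := by
    have h5 : β ≫ (W.arrow ≫ biprod.fst) = 0 ≫ (W.arrow ≫ biprod.fst) := by
      rw [← Category.assoc, ← hβ]
      simp
    exact (cancel_mono _).mp h5
  have hsnd : W.arrow ≫ biprod.snd = 0 := by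
    have h6 : W.arrow ≫ (biprod.snd ≫ (biprod.inr : B ⟶ A ⊞ B)) ≫ biprod.snd = 0 := by
      rw [← Category.assoc, hβ, hβ0, zero_comp, zero_comp]
    simpa using h6
  -- the section s and the essential mono e
  set L := (W : C) with hL
  set s : L ⟶ A := W.arrow ≫ biprod.fst with hs
  have hWs : s ≫ biprod.inl = W.arrow := by
    apply biprod.hom_ext <;> simp [hs, hsnd]
  set e : kernel f ⟶ L :=
    (Subobject.underlyingIso (kernel.ι f ≫ (biprod.inl : A ⟶ A ⊞ B))).inv ≫
      Subobject.ofLE K W hKW with he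
  have heW : e ≫ W.arrow = kernel.ι f ≫ biprod.inl := by
    rw [he, Category.assoc, Subobject.ofLE_arrow]
    exact Subobject.underlyingIso_arrow _
  have hes : e ≫ s = kernel.ι f := by
    have : (e ≫ s) ≫ (biprod.inl : A ⟶ A ⊞ B) = kernel.ι f ≫ biprod.inl := by
      rw [Category.assoc, hWs, heW]
    exact (cancel_mono _).mp this
  refine ⟨L, e, s, ⟨?_, ?_⟩, ?_, ?_, hes.symm⟩
  · -- Mono e
    haveI : Mono (e ≫ s) := hes ▸ inferInstance
    exact mono_of_mono e s
  · -- essential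
    intro P h0 hm
    haveI : Mono (kernel.ι h0 ≫ W.arrow) := mono_comp _ _
    have hZ2W : Subobject.mk (kernel.ι h0 ≫ W.arrow) ≤ W :=
      Subobject.mk_le_of_comm (kernel.ι h0) rfl
    have hZ2bot : Subobject.mk (kernel.ι h0 ≫ W.arrow) ⊓ K = ⊥ := by
      set V := Subobject.mk (kernel.ι h0 ≫ W.arrow) ⊓ K with hV
      have a1 : V ≤ Subobject.mk (kernel.ι h0 ≫ W.arrow) := inf_le_left
      have a2 : V ≤ K := inf_le_right
      have hv1 := Subobject.ofLEMk_comp a1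
      have hv2 := Subobject.ofLEMk_comp a2
      apply bot_of_arrow
      have c3 : Subobject.ofLEMk V _ a1 ≫ kernel.ι h0 = Subobject.ofLEMk V _ a2 ≫ e := by
        apply (cancel_mono W.arrow).mp
        rw [Category.assoc, Category.assoc, hv1, heW, hv2]
      have c4 : Subobject.ofLEMk V _ a2 = 0 := by
        apply (cancel_mono (e ≫ h0)).mp
        rw [← Category.assoc, ← c3, zero_comp, Category.assoc, kernel.condition, comp_zero]
      rw [← hv2, c4, zero_comp]
    have hZ2 : kernel.ι h0 ≫ W.arrow = 0 := by
      have := hEss _ hZ2W hZ2bot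
      rwa [Subobject.mk_eq_bot_iff_zero] at this
    exact Abelian.mono_of_kernel_ι_eq_zero _ (zero_of_comp_mono W.arrow hZ2)
  · -- IsSection s
    obtain ⟨p, hp⟩ := hWds
    refine ⟨biprod.inl ≫ p, ?_⟩
    rw [← Category.assoc, hWs, hp]
  · -- FullyInvariant s
    intro h0
    obtain ⟨α, hα⟩ := hWfi (biprod.fst ≫ h0 ≫ biprod.inl)
    refine ⟨α, ?_⟩
    apply (cancel_mono (biprod.inl : A ⟶ A ⊞ B)).mp
    simp only [Category.assoc]
    rw [hWs, ← hα, hs]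
    simp only [Category.assoc]
end

section
/- Let M, N₁ and N₂ be objects of an abelian category 𝒜 such that N₁ and N₂ are strongly M-CS-Rickart. Then the biproduct N₁ ⊞ N₂ is strongly M-CS-Rickart. -/
open CategoryTheory CategoryTheory.Limits

universe w v u

variable {C : Type u} [Category.{v} C] [Abelian C]

lemma isSection_mono {K M : C} {s : K ⟶ M} (h : IsSection s) : Mono s := by
  obtain ⟨p, hp⟩ := h
  constructor
  intro Z a b hab
  have : a ≫ s ≫ p = b ≫ s ≫ p := by rw [← Category.assoc, hab, Category.assoc]
  simpa [hp] using this

/-- A mono disjoint (in the morphism sense) from an essential mono is zero. -/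
lemma ess_disjoint_mono {K L : C} {e : K ⟶ L} (he : EssentialMono e)
    {Z : C} (z : Z ⟶ L) [Mono z]
    (hz : ∀ ⦃W : C⦄ (a : W ⟶ Z) (b : W ⟶ K), a ≫ z = b ≫ e → a = 0) :
    z = 0 := by
  obtain ⟨hmono, hess⟩ := he
  haveI : Mono e := hmono
  have hk0 : kernel.ι (e ≫ cokernel.π z) ≫ e ≫ cokernel.π z = 0 := kernel.condition _
  have hfac : Abelian.monoLift z (kernel.ι (e ≫ cokernel.π z) ≫ e)
      (by rw [Category.assoc]; exact hk0) ≫ z = kernel.ι (e ≫ cokernel.π z) ≫ e :=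
    Abelian.monoLift_comp _ _ _
  have hu0 : Abelian.monoLift z (kernel.ι (e ≫ cokernel.π z) ≫ e)
      (by rw [Category.assoc]; exact hk0) = 0 := hz _ _ hfac
  have hke : kernel.ι (e ≫ cokernel.π z) ≫ e = 0 := by rw [← hfac, hu0, zero_comp]
  have hk : kernel.ι (e ≫ cokernel.π z) = 0 := zero_of_comp_mono e hke
  have hmono2 : Mono (e ≫ cokernel.π z) := Preadditive.mono_of_kernel_zero hk
  haveI : Mono (cokernel.π z) := hess _ hmono2
  exact zero_of_comp_mono (cokernel.π z) (cokernel.condition z)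

/-- Any morphism disjoint from an essential mono is zero. -/
lemma ess_disjoint {K L : C} {e : K ⟶ L} (he : EssentialMono e)
    {Z : C} (z : Z ⟶ L)
    (hz : ∀ ⦃W : C⦄ (a : W ⟶ Z) (b : W ⟶ K), a ≫ z = b ≫ e → a = 0) :
    z = 0 := by
  have him : image.ι z = 0 := by
    refine ess_disjoint_mono he (image.ι z) ?_
    intro W a b hab
    have hcond : pullback.fst (factorThruImage z) a ≫ factorThruImage z =
        pullback.snd (factorThruImage z) a ≫ a := pullback.condition
    have h1 : pullback.fst (factorThruImage z) a ≫ z =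
        (pullback.snd (factorThruImage z) a ≫ b) ≫ e := by
      calc pullback.fst (factorThruImage z) a ≫ z
          = pullback.fst (factorThruImage z) a ≫ (factorThruImage z ≫ image.ι z) := by
            rw [image.fac]
        _ = (pullback.fst (factorThruImage z) a ≫ factorThruImage z) ≫ image.ι z := by
            simp only [Category.assoc]
        _ = (pullback.snd (factorThruImage z) a ≫ a) ≫ image.ι z := by rw [hcond]
        _ = pullback.snd (factorThruImage z) a ≫ (a ≫ image.ι z) := by
            simp only [Category.assoc]
        _ = pullback.snd (factorThruImage z) a ≫ (b ≫ e) := by rw [hab]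
        _ = (pullback.snd (factorThruImage z) a ≫ b) ≫ e := by simp only [Category.assoc]
    have h2 : pullback.fst (factorThruImage z) a = 0 := hz _ _ h1
    have h3 : pullback.snd (factorThruImage z) a ≫ a = 0 := by
      rw [← hcond, h2, zero_comp]
    haveI : Epi (pullback.snd (factorThruImage z) a) :=
      Abelian.epi_pullback_of_epi_f _ _
    exact (cancel_epi (pullback.snd (factorThruImage z) a)).1 (by simpa using h3)
  rw [← image.fac z, him, comp_zero]

lemma main_aux {M N N₁ N₂ L₁ L₂ : C} (f : M ⟶ N) (f₁ : M ⟶ N₁) (f₂ : M ⟶ N₂)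
    (hker : ∀ ⦃Z : C⦄ (t : Z ⟶ M), t ≫ f₁ = 0 → t ≫ f₂ = 0 → t ≫ f = 0)
    (hker₁ : kernel.ι f ≫ f₁ = 0) (hker₂ : kernel.ι f ≫ f₂ = 0)
    (s₁ : L₁ ⟶ M) (p₁ : M ⟶ L₁) (hp₁ : s₁ ≫ p₁ = 𝟙 L₁) (hfi₁ : FullyInvariant s₁)
    (s₂ : L₂ ⟶ M) (p₂ : M ⟶ L₂) (hp₂ : s₂ ≫ p₂ = 𝟙 L₂) (hfi₂ : FullyInvariant s₂)
    (e₁ : kernel f₁ ⟶ L₁) (he₁ : EssentialMono e₁) (hk₁ : kernel.ι f₁ = e₁ ≫ s₁)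
    (e₂ : kernel (p₁ ≫ s₁ ≫ f₂) ⟶ L₂) (he₂ : EssentialMono e₂)
    (hk₂ : kernel.ι (p₁ ≫ s₁ ≫ f₂) = e₂ ≫ s₂) :
    ∃ (L : C) (e : kernel f ⟶ L) (s : L ⟶ M),
      EssentialMono e ∧ IsSection s ∧ FullyInvariant s ∧ kernel.ι f = e ≫ s := by
  haveI hms₁ : Mono s₁ := isSection_mono ⟨p₁, hp₁⟩
  haveI hms₂ : Mono s₂ := isSection_mono ⟨p₂, hp₂⟩
  have hp₁' : ∀ ⦃Z : C⦄ (g : L₁ ⟶ Z), s₁ ≫ p₁ ≫ g = g := by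
    intro Z g; rw [← Category.assoc, hp₁, Category.id_comp]
  have hp₂' : ∀ ⦃Z : C⦄ (g : L₂ ⟶ Z), s₂ ≫ p₂ ≫ g = g := by
    intro Z g; rw [← Category.assoc, hp₂, Category.id_comp]
  -- the intersection
  have hw2 : pullback.fst s₁ s₂ ≫ s₁ = pullback.snd s₁ s₂ ≫ s₂ := pullback.condition
  haveI hmw : Mono (pullback.fst s₁ s₂ ≫ s₁) := mono_comp _ _
  -- section
  obtain ⟨α, hα⟩ := hfi₂ (p₁ ≫ s₁)
  have hα' : ∀ ⦃Z : C⦄ (g : M ⟶ Z), s₂ ≫ p₁ ≫ s₁ ≫ g = α ≫ s₂ ≫ g := by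
    intro Z g
    calc s₂ ≫ p₁ ≫ s₁ ≫ g = (s₂ ≫ p₁ ≫ s₁) ≫ g := by simp only [Category.assoc]
      _ = (α ≫ s₂) ≫ g := by rw [hα]
      _ = α ≫ s₂ ≫ g := by simp only [Category.assoc]
  obtain ⟨ρ, hρ₁, hρ₂⟩ : ∃ ρ : M ⟶ pullback s₁ s₂,
      ρ ≫ pullback.fst s₁ s₂ = p₂ ≫ s₂ ≫ p₁ ∧ ρ ≫ pullback.snd s₁ s₂ = p₂ ≫ α := by
    refine ⟨pullback.lift (p₂ ≫ s₂ ≫ p₁) (p₂ ≫ α) ?_, pullback.lift_fst _ _ _,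
      pullback.lift_snd _ _ _⟩
    calc (p₂ ≫ s₂ ≫ p₁) ≫ s₁ = p₂ ≫ (s₂ ≫ p₁ ≫ s₁) := by simp only [Category.assoc]
      _ = p₂ ≫ (α ≫ s₂) := by rw [hα]
      _ = (p₂ ≫ α) ≫ s₂ := by simp only [Category.assoc]
  have hsec : (pullback.fst s₁ s₂ ≫ s₁) ≫ ρ = 𝟙 (pullback s₁ s₂) := by
    rw [← cancel_mono (pullback.fst s₁ s₂ ≫ s₁)]
    rw [Category.id_comp]
    calc ((pullback.fst s₁ s₂ ≫ s₁) ≫ ρ) ≫ pullback.fst s₁ s₂ ≫ s₁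
        = (pullback.fst s₁ s₂ ≫ s₁) ≫ (ρ ≫ pullback.fst s₁ s₂) ≫ s₁ := by
          simp only [Category.assoc]
      _ = (pullback.snd s₁ s₂ ≫ s₂) ≫ (p₂ ≫ s₂ ≫ p₁) ≫ s₁ := by rw [hρ₁, hw2]
      _ = pullback.snd s₁ s₂ ≫ s₂ ≫ p₂ ≫ s₂ ≫ p₁ ≫ s₁ := by simp only [Category.assoc]
      _ = pullback.snd s₁ s₂ ≫ s₂ ≫ p₁ ≫ s₁ := by rw [hp₂']
      _ = (pullback.snd s₁ s₂ ≫ s₂) ≫ p₁ ≫ s₁ := by simp only [Category.assoc]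
      _ = pullback.fst s₁ s₂ ≫ s₁ ≫ p₁ ≫ s₁ := by rw [← hw2]; simp only [Category.assoc]
      _ = pullback.fst s₁ s₂ ≫ s₁ := by rw [hp₁']
  -- fully invariant
  have hfiw : FullyInvariant (pullback.fst s₁ s₂ ≫ s₁) := by
    intro h
    obtain ⟨α₁, hα₁⟩ := hfi₁ h
    obtain ⟨α₂, hα₂⟩ := hfi₂ h
    have haux : (pullback.fst s₁ s₂ ≫ α₁) ≫ s₁ = (pullback.snd s₁ s₂ ≫ α₂) ≫ s₂ := by
      calc (pullback.fst s₁ s₂ ≫ α₁) ≫ s₁ = pullback.fst s₁ s₂ ≫ (α₁ ≫ s₁) := by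
            simp only [Category.assoc]
        _ = pullback.fst s₁ s₂ ≫ (s₁ ≫ h) := by rw [hα₁]
        _ = (pullback.fst s₁ s₂ ≫ s₁) ≫ h := by simp only [Category.assoc]
        _ = (pullback.snd s₁ s₂ ≫ s₂) ≫ h := by rw [hw2]
        _ = pullback.snd s₁ s₂ ≫ (s₂ ≫ h) := by simp only [Category.assoc]
        _ = pullback.snd s₁ s₂ ≫ (α₂ ≫ s₂) := by rw [hα₂]
        _ = (pullback.snd s₁ s₂ ≫ α₂) ≫ s₂ := by simp only [Category.assoc]
    obtain ⟨γ, hγ₁, hγ₂⟩ : ∃ γ, γ ≫ pullback.fst s₁ s₂ = pullback.fst s₁ s₂ ≫ α₁ ∧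
        γ ≫ pullback.snd s₁ s₂ = pullback.snd s₁ s₂ ≫ α₂ :=
      ⟨pullback.lift _ _ haux, pullback.lift_fst _ _ _, pullback.lift_snd _ _ _⟩
    refine ⟨γ, ?_⟩
    calc (pullback.fst s₁ s₂ ≫ s₁) ≫ h = pullback.fst s₁ s₂ ≫ (s₁ ≫ h) := by
          simp only [Category.assoc]
      _ = pullback.fst s₁ s₂ ≫ (α₁ ≫ s₁) := by rw [hα₁]
      _ = (pullback.fst s₁ s₂ ≫ α₁) ≫ s₁ := by simp only [Category.assoc]
      _ = (γ ≫ pullback.fst s₁ s₂) ≫ s₁ := by rw [hγ₁]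
      _ = γ ≫ pullback.fst s₁ s₂ ≫ s₁ := by simp only [Category.assoc]
  -- factor kernel.ι f through the pullback
  obtain ⟨u, hu⟩ : ∃ u : kernel f ⟶ kernel f₁, u ≫ kernel.ι f₁ = kernel.ι f :=
    ⟨kernel.lift f₁ (kernel.ι f) hker₁, kernel.lift_ι _ _ _⟩
  have hue : u ≫ e₁ ≫ s₁ = kernel.ι f := by rw [← hk₁, hu]
  have hιp : kernel.ι f ≫ p₁ ≫ s₁ = kernel.ι f := by
    calc kernel.ι f ≫ p₁ ≫ s₁ = (u ≫ e₁ ≫ s₁) ≫ p₁ ≫ s₁ := by rw [hue]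
      _ = u ≫ e₁ ≫ s₁ ≫ p₁ ≫ s₁ := by simp only [Category.assoc]
      _ = u ≫ e₁ ≫ s₁ := by rw [hp₁' s₁]
      _ = kernel.ι f := hue
  have hv0 : kernel.ι f ≫ p₁ ≫ s₁ ≫ f₂ = 0 := by
    calc kernel.ι f ≫ p₁ ≫ s₁ ≫ f₂ = (kernel.ι f ≫ p₁ ≫ s₁) ≫ f₂ := by
          simp only [Category.assoc]
      _ = 0 := by rw [hιp, hker₂]
  obtain ⟨v, hv⟩ : ∃ v : kernel f ⟶ kernel (p₁ ≫ s₁ ≫ f₂),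
      v ≫ kernel.ι (p₁ ≫ s₁ ≫ f₂) = kernel.ι f :=
    ⟨kernel.lift _ (kernel.ι f) hv0, kernel.lift_ι _ _ _⟩
  have hve : v ≫ e₂ ≫ s₂ = kernel.ι f := by rw [← hk₂, hv]
  obtain ⟨e, he₁', he₂'⟩ : ∃ e : kernel f ⟶ pullback s₁ s₂,
      e ≫ pullback.fst s₁ s₂ = u ≫ e₁ ∧ e ≫ pullback.snd s₁ s₂ = v ≫ e₂ := by
    refine ⟨pullback.lift (u ≫ e₁) (v ≫ e₂) ?_, pullback.lift_fst _ _ _,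
      pullback.lift_snd _ _ _⟩
    simp only [Category.assoc]; rw [hue, hve]
  have hew : e ≫ pullback.fst s₁ s₂ ≫ s₁ = kernel.ι f := by
    rw [← Category.assoc, he₁', Category.assoc, hue]
  haveI hme : Mono e := by
    have h1 : Mono (e ≫ pullback.fst s₁ s₂ ≫ s₁) := by rw [hew]; infer_instance
    exact mono_of_mono e (pullback.fst s₁ s₂ ≫ s₁)
  -- key : e is "essentially dense" in the pullback
  have hkey : ∀ ⦃X : C⦄ (x : X ⟶ pullback s₁ s₂), Mono x →
      (∀ ⦃W : C⦄ (a : W ⟶ X) (b : W ⟶ kernel f), a ≫ x = b ≫ e → a = 0) → x = 0 := by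
    intro X x hmx hd
    haveI := hmx
    haveI hmxq₂ : Mono (x ≫ pullback.snd s₁ s₂) := by
      have h1 : Mono ((x ≫ pullback.snd s₁ s₂) ≫ s₂) := by
        rw [Category.assoc, ← hw2]; exact mono_comp x _
      exact mono_of_mono _ s₂
    have hab : pullback.fst (x ≫ pullback.snd s₁ s₂) e₂ ≫ x ≫ pullback.snd s₁ s₂ =
        pullback.snd (x ≫ pullback.snd s₁ s₂) e₂ ≫ e₂ := pullback.condition
    haveI hma : Mono (pullback.fst (x ≫ pullback.snd s₁ s₂) e₂) := by
      haveI : Mono e₂ := he₂.1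
      infer_instance
    -- step 1 : pbfst ≫ x ≫ q₁ is disjoint from e₁, hence zero
    have ha0 : pullback.fst (x ≫ pullback.snd s₁ s₂) e₂ ≫ x ≫ pullback.fst s₁ s₂ = 0 := by
      haveI hmz : Mono (pullback.fst (x ≫ pullback.snd s₁ s₂) e₂ ≫ x ≫ pullback.fst s₁ s₂) := by
        have h1 : Mono ((pullback.fst (x ≫ pullback.snd s₁ s₂) e₂ ≫ x ≫ pullback.fst s₁ s₂) ≫ s₁) := by
          simp only [Category.assoc]
          exact mono_comp _ _
        exact mono_of_mono _ s₁
      refine ess_disjoint_mono he₁ _ ?_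
      intro W c d hcd
      -- the morphism τ = c ≫ pbfst ≫ x ≫ (fst ≫ s₁) lands in kernel f
      have hτ₁ : c ≫ pullback.fst (x ≫ pullback.snd s₁ s₂) e₂ ≫ x ≫ pullback.fst s₁ s₂ ≫ s₁ =
          d ≫ e₁ ≫ s₁ := by
        calc c ≫ pullback.fst (x ≫ pullback.snd s₁ s₂) e₂ ≫ x ≫ pullback.fst s₁ s₂ ≫ s₁
            = (c ≫ pullback.fst (x ≫ pullback.snd s₁ s₂) e₂ ≫ x ≫ pullback.fst s₁ s₂) ≫ s₁ := by
              simp only [Category.assoc]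
          _ = (d ≫ e₁) ≫ s₁ := by rw [← hcd]
          _ = d ≫ e₁ ≫ s₁ := by simp only [Category.assoc]
      have hτ₂ : c ≫ pullback.fst (x ≫ pullback.snd s₁ s₂) e₂ ≫ x ≫ pullback.fst s₁ s₂ ≫ s₁ =
          (c ≫ pullback.snd (x ≫ pullback.snd s₁ s₂) e₂) ≫ e₂ ≫ s₂ := by
        calc c ≫ pullback.fst (x ≫ pullback.snd s₁ s₂) e₂ ≫ x ≫ pullback.fst s₁ s₂ ≫ s₁
            = c ≫ (pullback.fst (x ≫ pullback.snd s₁ s₂) e₂ ≫ x ≫ pullback.snd s₁ s₂) ≫ s₂ := by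
              rw [hw2]; simp only [Category.assoc]
          _ = c ≫ (pullback.snd (x ≫ pullback.snd s₁ s₂) e₂ ≫ e₂) ≫ s₂ := by rw [hab]
          _ = (c ≫ pullback.snd (x ≫ pullback.snd s₁ s₂) e₂) ≫ e₂ ≫ s₂ := by
              simp only [Category.assoc]
      have hτf₁ : (c ≫ pullback.fst (x ≫ pullback.snd s₁ s₂) e₂ ≫ x ≫ pullback.fst s₁ s₂ ≫ s₁) ≫ f₁ = 0 := by
        rw [hτ₁]
        calc (d ≫ e₁ ≫ s₁) ≫ f₁ = d ≫ (e₁ ≫ s₁) ≫ f₁ := by simp only [Category.assoc]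
          _ = d ≫ kernel.ι f₁ ≫ f₁ := by rw [hk₁]
          _ = 0 := by rw [kernel.condition, comp_zero]
      have hτp : (c ≫ pullback.fst (x ≫ pullback.snd s₁ s₂) e₂ ≫ x ≫ pullback.fst s₁ s₂ ≫ s₁) ≫ p₁ ≫ s₁ =
          c ≫ pullback.fst (x ≫ pullback.snd s₁ s₂) e₂ ≫ x ≫ pullback.fst s₁ s₂ ≫ s₁ := by
        rw [hτ₁]; simp only [Category.assoc]; rw [hp₁']
      have hτf₂ : (c ≫ pullback.fst (x ≫ pullback.snd s₁ s₂) e₂ ≫ x ≫ pullback.fst s₁ s₂ ≫ s₁) ≫ f₂ = 0 := by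
        have hτf' : (c ≫ pullback.fst (x ≫ pullback.snd s₁ s₂) e₂ ≫ x ≫ pullback.fst s₁ s₂ ≫ s₁) ≫ p₁ ≫ s₁ ≫ f₂ = 0 := by
          calc (c ≫ pullback.fst (x ≫ pullback.snd s₁ s₂) e₂ ≫ x ≫ pullback.fst s₁ s₂ ≫ s₁) ≫ p₁ ≫ s₁ ≫ f₂
              = ((c ≫ pullback.snd (x ≫ pullback.snd s₁ s₂) e₂) ≫ e₂ ≫ s₂) ≫ p₁ ≫ s₁ ≫ f₂ := by rw [← hτ₂]
            _ = (c ≫ pullback.snd (x ≫ pullback.snd s₁ s₂) e₂) ≫ kernel.ι (p₁ ≫ s₁ ≫ f₂) ≫ p₁ ≫ s₁ ≫ f₂ := by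
                rw [hk₂]; simp only [Category.assoc]
            _ = 0 := by rw [kernel.condition, comp_zero]
        calc (c ≫ pullback.fst (x ≫ pullback.snd s₁ s₂) e₂ ≫ x ≫ pullback.fst s₁ s₂ ≫ s₁) ≫ f₂
            = ((c ≫ pullback.fst (x ≫ pullback.snd s₁ s₂) e₂ ≫ x ≫ pullback.fst s₁ s₂ ≫ s₁) ≫ p₁ ≫ s₁) ≫ f₂ := by
              rw [hτp]
          _ = (c ≫ pullback.fst (x ≫ pullback.snd s₁ s₂) e₂ ≫ x ≫ pullback.fst s₁ s₂ ≫ s₁) ≫ p₁ ≫ s₁ ≫ f₂ := by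
              simp only [Category.assoc]
          _ = 0 := hτf'
      have hτf : (c ≫ pullback.fst (x ≫ pullback.snd s₁ s₂) e₂ ≫ x ≫ pullback.fst s₁ s₂ ≫ s₁) ≫ f = 0 :=
        hker _ hτf₁ hτf₂
      obtain ⟨b', hb'⟩ : ∃ b' : W ⟶ kernel f, b' ≫ kernel.ι f =
          c ≫ pullback.fst (x ≫ pullback.snd s₁ s₂) e₂ ≫ x ≫ pullback.fst s₁ s₂ ≫ s₁ :=
        ⟨kernel.lift f _ hτf, kernel.lift_ι _ _ _⟩
      have hfin : (c ≫ pullback.fst (x ≫ pullback.snd s₁ s₂) e₂) ≫ x = b' ≫ e := by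
        rw [← cancel_mono (pullback.fst s₁ s₂ ≫ s₁)]
        calc ((c ≫ pullback.fst (x ≫ pullback.snd s₁ s₂) e₂) ≫ x) ≫ pullback.fst s₁ s₂ ≫ s₁
            = c ≫ pullback.fst (x ≫ pullback.snd s₁ s₂) e₂ ≫ x ≫ pullback.fst s₁ s₂ ≫ s₁ := by
              simp only [Category.assoc]
          _ = b' ≫ kernel.ι f := hb'.symm
          _ = b' ≫ e ≫ pullback.fst s₁ s₂ ≫ s₁ := by rw [hew]
          _ = (b' ≫ e) ≫ pullback.fst s₁ s₂ ≫ s₁ := by simp only [Category.assoc]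
      have hca : c ≫ pullback.fst (x ≫ pullback.snd s₁ s₂) e₂ = 0 := hd _ _ hfin
      exact (cancel_mono (pullback.fst (x ≫ pullback.snd s₁ s₂) e₂)).1 (by simpa using hca)
    -- hence pbfst ≫ x = 0, so pbfst = 0
    have hax : pullback.fst (x ≫ pullback.snd s₁ s₂) e₂ ≫ x = 0 := by
      have hh : (pullback.fst (x ≫ pullback.snd s₁ s₂) e₂ ≫ x) ≫ pullback.fst s₁ s₂ ≫ s₁ = 0 := by
        calc (pullback.fst (x ≫ pullback.snd s₁ s₂) e₂ ≫ x) ≫ pullback.fst s₁ s₂ ≫ s₁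
            = (pullback.fst (x ≫ pullback.snd s₁ s₂) e₂ ≫ x ≫ pullback.fst s₁ s₂) ≫ s₁ := by
              simp only [Category.assoc]
          _ = 0 := by rw [ha0, zero_comp]
      exact zero_of_comp_mono _ hh
    have ha : pullback.fst (x ≫ pullback.snd s₁ s₂) e₂ = 0 :=
      hd _ 0 (by rw [hax, zero_comp])
    -- step 2 : x ≫ q₂ is disjoint from e₂, hence zero
    have hxq₂ : x ≫ pullback.snd s₁ s₂ = 0 := by
      refine ess_disjoint he₂ _ ?_
      intro W a' b' ha'b'
      have hlift : a' = pullback.lift a' b' ha'b' ≫ pullback.fst (x ≫ pullback.snd s₁ s₂) e₂ :=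
        (pullback.lift_fst _ _ _).symm
      rw [hlift, ha, comp_zero]
    have hxw : x ≫ pullback.fst s₁ s₂ ≫ s₁ = 0 := by
      calc x ≫ pullback.fst s₁ s₂ ≫ s₁ = (x ≫ pullback.snd s₁ s₂) ≫ s₂ := by
            rw [hw2]; simp only [Category.assoc]
        _ = 0 := by rw [hxq₂, zero_comp]
    exact zero_of_comp_mono (pullback.fst s₁ s₂ ≫ s₁) hxw
  -- conclude
  refine ⟨pullback s₁ s₂, e, pullback.fst s₁ s₂ ≫ s₁, ⟨hme, ?_⟩, ⟨ρ, hsec⟩, hfiw, hew.symm⟩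
  intro T h hmh
  apply Preadditive.mono_of_kernel_zero
  refine hkey (kernel.ι h) inferInstance ?_
  intro W a b hab
  have h1 : b ≫ e ≫ h = 0 := by
    rw [← Category.assoc, ← hab, Category.assoc, kernel.condition, comp_zero]
  have hb : b = 0 := zero_of_comp_mono (e ≫ h) (by rw [← Category.assoc] at h1 ⊢; exact h1)
  have h2 : a ≫ kernel.ι h = 0 := by rw [hab, hb, zero_comp]
  exact zero_of_comp_mono _ h2

theorem stmt14 (M N₁ N₂ : C) (h₁ : StronglyCSRickart M N₁)
    (h₂ : StronglyCSRickart M N₂) : StronglyCSRickart M (N₁ ⊞ N₂) := by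
  intro f
  obtain ⟨L₁, e₁, s₁, he₁, ⟨p₁, hp₁⟩, hfi₁, hk₁⟩ := h₁ (f ≫ biprod.fst)
  obtain ⟨L₂, e₂, s₂, he₂, ⟨p₂, hp₂⟩, hfi₂, hk₂⟩ := h₂ (p₁ ≫ s₁ ≫ (f ≫ biprod.snd))
  refine main_aux f (f ≫ biprod.fst) (f ≫ biprod.snd) ?_ ?_ ?_
    s₁ p₁ hp₁ hfi₁ s₂ p₂ hp₂ hfi₂ e₁ he₁ hk₁ e₂ he₂ hk₂
  · intro Z t ht₁ ht₂
    have h1 : (t ≫ f) ≫ biprod.fst = (0 : Z ⟶ N₁ ⊞ N₂) ≫ biprod.fst := by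
      rw [Category.assoc, ht₁, zero_comp]
    have h2 : (t ≫ f) ≫ biprod.snd = (0 : Z ⟶ N₁ ⊞ N₂) ≫ biprod.snd := by
      rw [Category.assoc, ht₂, zero_comp]
    exact biprod.hom_ext _ _ h1 h2
  · rw [← Category.assoc, kernel.condition, zero_comp]
  · rw [← Category.assoc, kernel.condition, zero_comp]
end
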